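/- arXiv:1801.09457 — 18 statements merged into one kernel-verified Lean document; each statement's English description precedes it below -/
import Mathlib

section
/- Let (x_n)_{n≥-3} be a well-defined solution of the difference equation. Then for all integers n ≥ 1: x_{4n-3} = d·α^n·∏_{p=0}^{n-2}( A^{2p+2} + B·b·d·∑_{i=0}^{2p+1} A^i·α^{2p+1-i} ) / ∏_{p=0}^{n-1}( A^{2p+1} + B·b·d·∑_{i=0}^{2p} A^i·α^{2p-i} ), and x_{4n-1} = b·α^n·∏_{p=0}^{n-1}( A^{2p+1} + B·b·d·∑_{i=0}^{2p} A^i·α^{2p-i} ) / ∏_{p=0}^{n-1}( A^{2p+2} + B·b·d·∑_{i=0}^{2p+1} A^i·α^{2p+1-i} ). -/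
open Finset

/-!
Only the terms `y k = x (2k - 3)` matter; they satisfy `y (k+2) = α y k / (A + B y (k+1) y k)`
with `y 0 = d`, `y 1 = b`. Let `T 0 = 1`, `T (j+1) = A T j + B b d α ^ j`, so that the products
of the statement are `∏ T (2p+1)` and `∏ T (2p+2)`. The quantity `B y (j+1) y j T j` equals
`B b d α ^ j` for every `j`, because each step multiplies it by `α`; hence
`A + B y (j+1) y j = T (j+1) / T j`, i.e. `y (j+2) = α y j T j / T (j+1)`, and the formulas
follow by telescoping along even and along odd indices.
-/

variable {K : Type*} [Field K]

def denomSeq (α A β : K) (j : ℕ) : K :=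
  A ^ j + β * ∑ i ∈ range j, A ^ i * α ^ (j - 1 - i)

section denomSeq

variable (α A β : K)

@[simp]
theorem denomSeq_zero : denomSeq α A β 0 = 1 := by
  simp [denomSeq]

theorem denomSeq_add_one_eq (j : ℕ) :
    denomSeq α A β (j + 1) = A ^ (j + 1) + β * ∑ i ∈ range (j + 1), A ^ i * α ^ (j - i) := by
  simp only [denomSeq, Nat.add_sub_cancel]

theorem denomSeq_succ (j : ℕ) :
    denomSeq α A β (j + 1) = A * denomSeq α A β j + β * α ^ j := by
  have hsum : ∑ i ∈ range (j + 1), A ^ i * α ^ (j - i) =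
      A * ∑ i ∈ range j, A ^ i * α ^ (j - 1 - i) + α ^ j := by
    rw [sum_range_succ', mul_sum, pow_zero, one_mul, Nat.sub_zero]
    congr 1
    refine sum_congr rfl fun i _ => ?_
    rw [Nat.sub_sub, add_comm 1 i, pow_succ', mul_assoc]
  rw [denomSeq_add_one_eq, hsum, denomSeq]
  ring

end denomSeq

theorem add_mul_mul_eq_denomSeq_div {α A B β u v : K} {j : ℕ} (hT : denomSeq α A β j ≠ 0)
    (h : B * u * v * denomSeq α A β j = β * α ^ j) :
    A + B * u * v = denomSeq α A β (j + 1) / denomSeq α A β j := by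
  rw [eq_div_iff hT, denomSeq_succ]
  linear_combination h

theorem eq_mul_pow_mul_prod_of_add_two {M : Type*} [CommMonoid M] {y r : ℕ → M} {α : M}
    (h : ∀ j, y (j + 2) = α * y j * r j) (i n : ℕ) :
    y (2 * n + i) = y i * α ^ n * ∏ k ∈ range n, r (2 * k + i) := by
  induction n with
  | zero => simp
  | succ n ih =>
    rw [show 2 * (n + 1) + i = 2 * n + i + 2 by ring, h, ih, prod_range_succ, pow_succ]
    ac_rfl

section Solution

variable {α A B : K} {y : ℕ → K}

theorem denomSeq_ne_zero_and_mul_denomSeq_eq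
    (hwd : ∀ j, A + B * y (j + 1) * y j ≠ 0)
    (hy : ∀ j, y (j + 2) = α * y j / (A + B * y (j + 1) * y j)) (j : ℕ) :
    denomSeq α A (B * y 1 * y 0) j ≠ 0 ∧
      B * y (j + 1) * y j * denomSeq α A (B * y 1 * y 0) j = B * y 1 * y 0 * α ^ j := by
  induction j with
  | zero => simp
  | succ j ih =>
    obtain ⟨hT, hinv⟩ := ih
    have hden := add_mul_mul_eq_denomSeq_div hT hinv
    have hT' : denomSeq α A (B * y 1 * y 0) (j + 1) ≠ 0 := by
      intro h
      apply hwd j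
      rw [hden, h, zero_div]
    refine ⟨hT', ?_⟩
    rw [hy, hden]
    field_simp
    linear_combination α * hinv

theorem solution_add_two (hwd : ∀ j, A + B * y (j + 1) * y j ≠ 0)
    (hy : ∀ j, y (j + 2) = α * y j / (A + B * y (j + 1) * y j)) (j : ℕ) :
    y (j + 2) =
      α * y j * (denomSeq α A (B * y 1 * y 0) j / denomSeq α A (B * y 1 * y 0) (j + 1)) := by
  obtain ⟨hT, hinv⟩ := denomSeq_ne_zero_and_mul_denomSeq_eq hwd hy j
  rw [hy, add_mul_mul_eq_denomSeq_div hT hinv, div_div_eq_mul_div, mul_div_assoc]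

end Solution

theorem stmt_0_general (α A B b d : ℝ)
    (x : ℤ → ℝ)
    (hx3 : x (-3) = d) (hx1 : x (-1) = b)
    (hwd : ∀ n : ℤ, 0 ≤ n → A + B * x (n - 1) * x (n - 3) ≠ 0)
    (hrec : ∀ n : ℤ, 0 ≤ n →
      x (n + 1) = α * x (n - 3) / (A + B * x (n - 1) * x (n - 3))) :
    ∀ n : ℕ, 1 ≤ n →
      x (4 * (n : ℤ) - 3) =
        d * α ^ n *
          (∏ p ∈ Finset.range (n - 1),
            (A ^ (2 * p + 2) +
              B * b * d * ∑ i ∈ Finset.range (2 * p + 2), A ^ i * α ^ (2 * p + 1 - i))) /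
          (∏ p ∈ Finset.range n,
            (A ^ (2 * p + 1) +
              B * b * d * ∑ i ∈ Finset.range (2 * p + 1), A ^ i * α ^ (2 * p - i))) ∧
      x (4 * (n : ℤ) - 1) =
        b * α ^ n *
          (∏ p ∈ Finset.range n,
            (A ^ (2 * p + 1) +
              B * b * d * ∑ i ∈ Finset.range (2 * p + 1), A ^ i * α ^ (2 * p - i))) /
          (∏ p ∈ Finset.range n,
            (A ^ (2 * p + 2) +
              B * b * d * ∑ i ∈ Finset.range (2 * p + 2), A ^ i * α ^ (2 * p + 1 - i))) := by
  intro n hn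
  obtain ⟨m, rfl⟩ := Nat.exists_eq_add_of_le' hn
  set y : ℕ → ℝ := fun k => x (2 * k - 3)
  have hy_index (k : ℕ) (l : ℤ) (h : 2 * (k : ℤ) - 3 = l) : y k = x l := by rw [← h]
  have hrec_y (j : ℕ) : y (j + 2) = α * y j / (A + B * y (j + 1) * y j) := by
    rw [hy_index (j + 2) (2 * j + 1) (by push_cast; ring), hy_index (j + 1) (2 * j - 1)
      (by push_cast; ring)]
    exact hrec (2 * j) (by positivity)
  have hwd_y (j : ℕ) : A + B * y (j + 1) * y j ≠ 0 := by
    rw [hy_index (j + 1) (2 * j - 1) (by push_cast; ring)]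
    exact hwd (2 * j) (by positivity)
  have hclosed := eq_mul_pow_mul_prod_of_add_two (solution_add_two hwd_y hrec_y)
  have hy0 : y 0 = d := (hy_index 0 (-3) (by norm_num)).trans hx3
  have hy1 : y 1 = b := (hy_index 1 (-1) (by norm_num)).trans hx1
  rw [hy0, hy1] at hclosed
  have hP (p : ℕ) : A ^ (2 * p + 2) +
      B * b * d * ∑ i ∈ range (2 * p + 2), A ^ i * α ^ (2 * p + 1 - i) =
      denomSeq α A (B * b * d) (2 * p + 2) :=
    (denomSeq_add_one_eq α A (B * b * d) (2 * p + 1)).symm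
  have hQ (p : ℕ) := (denomSeq_add_one_eq α A (B * b * d) (2 * p)).symm
  simp only [hP, hQ, Nat.add_sub_cancel]
  constructor
  · rw [← hy_index (2 * (m + 1) + 0) _ (by push_cast; ring), hclosed, hy0, prod_div_distrib,
      prod_range_succ']
    simp only [add_zero, mul_add, mul_one, mul_zero, denomSeq_zero]
    ring
  · rw [← hy_index (2 * (m + 1) + 1) _ (by push_cast; ring), hclosed, hy1, prod_div_distrib]
    ring

/-- Explicit formula for the subsequences `x_{4n-3}` and `x_{4n-1}` of a well-defined
solution of `x_{n+1} = α x_{n-3} / (A + B x_{n-1} x_{n-3})`. -/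
theorem stmt_0 (α A B a b c d : ℝ) (hα : α ≠ 0) (hB : B ≠ 0)
    (ha : a ≠ 0) (hb : b ≠ 0) (hc : c ≠ 0) (hd : d ≠ 0)
    (x : ℤ → ℝ)
    (hx3 : x (-3) = d) (hx2 : x (-2) = c) (hx1 : x (-1) = b) (hx0 : x 0 = a)
    (hwd : ∀ n : ℤ, 0 ≤ n → A + B * x (n - 1) * x (n - 3) ≠ 0)
    (hrec : ∀ n : ℤ, 0 ≤ n →
      x (n + 1) = α * x (n - 3) / (A + B * x (n - 1) * x (n - 3))) :
    ∀ n : ℕ, 1 ≤ n →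
      x (4 * (n : ℤ) - 3) =
        d * α ^ n *
          (∏ p ∈ Finset.range (n - 1),
            (A ^ (2 * p + 2) +
              B * b * d * ∑ i ∈ Finset.range (2 * p + 2), A ^ i * α ^ (2 * p + 1 - i))) /
          (∏ p ∈ Finset.range n,
            (A ^ (2 * p + 1) +
              B * b * d * ∑ i ∈ Finset.range (2 * p + 1), A ^ i * α ^ (2 * p - i))) ∧
      x (4 * (n : ℤ) - 1) =
        b * α ^ n *
          (∏ p ∈ Finset.range n,
            (A ^ (2 * p + 1) +
              B * b * d * ∑ i ∈ Finset.range (2 * p + 1), A ^ i * α ^ (2 * p - i))) /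
          (∏ p ∈ Finset.range n,
            (A ^ (2 * p + 2) +
              B * b * d * ∑ i ∈ Finset.range (2 * p + 2), A ^ i * α ^ (2 * p + 1 - i))) :=
  stmt_0_general α A B b d x hx3 hx1 hwd hrec
end

section
/- Let (x_n)_{n≥-3} be a well-defined solution of the difference equation. Then for all integers n ≥ 1: x_{4n-2} = c·α^n·∏_{p=0}^{n-2}( A^{2p+2} + B·a·c·∑_{i=0}^{2p+1} A^i·α^{2p+1-i} ) / ∏_{p=0}^{n-1}( A^{2p+1} + B·a·c·∑_{i=0}^{2p} A^i·α^{2p-i} ), and x_{4n} = a·α^n·∏_{p=0}^{n-1}( A^{2p+1} + B·a·c·∑_{i=0}^{2p} A^i·α^{2p-i} ) / ∏_{p=0}^{n-1}( A^{2p+2} + B·a·c·∑_{i=0}^{2p+1} A^i·α^{2p+1-i} ). -/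
/-!
The terms `y m = x (2m - 2)` satisfy `y (m+2) = α y m / (A + B y (m+1) y m)`. With
`S k = A^k + B y 1 y 0 ∑_{i<k} A^i α^(k-1-i)`, so that `S (k+1) = A S k + B y 1 y 0 α^k`, one checks
inductively that `y (m+1) y m · S m = y 1 y 0 · α^m`. Hence `S (m+1) = (A + B y (m+1) y m) S m`,
i.e. `y (m+2) S (m+1) = α y m S m`, and iterating this two-step relation gives the products.
-/

open Finset

section GeomDenom

variable {R : Type*} [CommRing R]

def geomDenom (A α β : R) (k : ℕ) : R :=
  A ^ k + β * ∑ i ∈ range k, A ^ i * α ^ (k - 1 - i)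

@[simp]
lemma geomDenom_zero (A α β : R) : geomDenom A α β 0 = 1 := by
  simp [geomDenom]

lemma geomDenom_add_one (A α β : R) (k : ℕ) :
    geomDenom A α β (k + 1) = A * geomDenom A α β k + β * α ^ k := by
  have hsum : ∑ i ∈ range (k + 1), A ^ i * α ^ (k - i) =
      A * ∑ i ∈ range k, A ^ i * α ^ (k - 1 - i) + α ^ k := by
    rw [sum_range_succ', mul_sum]
    simp only [pow_succ', Nat.sub_sub, add_comm 1, mul_assoc, pow_zero, one_mul, Nat.sub_zero]
  rw [geomDenom, geomDenom, Nat.add_sub_cancel, hsum]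
  ring

end GeomDenom

namespace SecondOrderRecurrence

variable {K : Type*} [Field K] {α A B : K} {y : ℕ → K}
  (hrec : ∀ m, y (m + 2) = α * y m / (A + B * y (m + 1) * y m))
  (hwd : ∀ m, A + B * y (m + 1) * y m ≠ 0)

local notation "S" => geomDenom A α (B * y 1 * y 0)

include hrec hwd

lemma mul_denom_eq (m : ℕ) : y (m + 2) * (A + B * y (m + 1) * y m) = α * y m := by
  rw [hrec m, div_mul_cancel₀ _ (hwd m)]

lemma mul_mul_geomDenom (m : ℕ) : y (m + 1) * y m * S m = y 1 * y 0 * α ^ m := by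
  induction m with
  | zero => simp
  | succ m ih =>
    rw [geomDenom_add_one]
    linear_combination y (m + 1) * S m * mul_denom_eq hrec hwd m +
      (α - B * y (m + 2) * y (m + 1)) * ih

lemma geomDenom_add_one_eq_mul (m : ℕ) : S (m + 1) = (A + B * y (m + 1) * y m) * S m := by
  rw [geomDenom_add_one]
  linear_combination -B * mul_mul_geomDenom hrec hwd m

lemma geomDenom_ne_zero (m : ℕ) : S m ≠ 0 := by
  induction m with
  | zero => simp
  | succ m ih =>
    rw [geomDenom_add_one_eq_mul hrec hwd]
    exact mul_ne_zero (hwd m) ih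

lemma mul_geomDenom_add_one (m : ℕ) : y (m + 2) * S (m + 1) = α * y m * S m := by
  rw [geomDenom_add_one_eq_mul hrec hwd, ← mul_assoc, mul_denom_eq hrec hwd]

lemma eq_prod_div_prod (j n : ℕ) :
    y (2 * n + j) = y j * α ^ n * (∏ k ∈ range n, S (2 * k + j)) /
      ∏ k ∈ range n, S (2 * k + j + 1) := by
  refine eq_div_of_mul_eq (prod_ne_zero_iff.mpr fun k _ => geomDenom_ne_zero hrec hwd _) ?_
  induction n with
  | zero => simp
  | succ n ih =>
    rw [prod_range_succ, prod_range_succ, show 2 * (n + 1) + j = 2 * n + j + 2 by ring]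
    linear_combination
      (∏ k ∈ range n, S (2 * k + j + 1)) * mul_geomDenom_add_one hrec hwd (2 * n + j) +
        α * S (2 * n + j) * ih

end SecondOrderRecurrence

theorem stmt_1_general (α A B a c : ℝ)
    (x : ℤ → ℝ)
    (hx2 : x (-2) = c) (hx0 : x 0 = a)
    (hwd : ∀ n : ℤ, 0 ≤ n → A + B * x (n - 1) * x (n - 3) ≠ 0)
    (hrec : ∀ n : ℤ, 0 ≤ n →
      x (n + 1) = α * x (n - 3) / (A + B * x (n - 1) * x (n - 3))) :
    ∀ n : ℕ, 1 ≤ n →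
      x (4 * (n : ℤ) - 2) =
        c * α ^ n *
          (∏ p ∈ Finset.range (n - 1),
            (A ^ (2 * p + 2) +
              B * a * c * ∑ i ∈ Finset.range (2 * p + 2), A ^ i * α ^ (2 * p + 1 - i))) /
          (∏ p ∈ Finset.range n,
            (A ^ (2 * p + 1) +
              B * a * c * ∑ i ∈ Finset.range (2 * p + 1), A ^ i * α ^ (2 * p - i))) ∧
      x (4 * (n : ℤ)) =
        a * α ^ n *
          (∏ p ∈ Finset.range n,
            (A ^ (2 * p + 1) +
              B * a * c * ∑ i ∈ Finset.range (2 * p + 1), A ^ i * α ^ (2 * p - i))) /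
          (∏ p ∈ Finset.range n,
            (A ^ (2 * p + 2) +
              B * a * c * ∑ i ∈ Finset.range (2 * p + 2), A ^ i * α ^ (2 * p + 1 - i))) := by
  obtain ⟨y, hy⟩ : ∃ y : ℕ → ℝ, ∀ m, y m = x (2 * m - 2) := ⟨_, fun _ => rfl⟩
  have hrec' (m : ℕ) : y (m + 2) = α * y m / (A + B * y (m + 1) * y m) := by
    have h := hrec (2 * m + 1) (by positivity)
    simp only [hy]; push_cast
    ring_nf at h ⊢
    exact h
  have hwd' (m : ℕ) : A + B * y (m + 1) * y m ≠ 0 := by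
    have h := hwd (2 * m + 1) (by positivity)
    simp only [hy]; push_cast
    ring_nf at h ⊢
    exact h
  intro n hn
  obtain ⟨m, rfl⟩ : ∃ m, n = m + 1 := ⟨n - 1, by omega⟩
  have h0 := SecondOrderRecurrence.eq_prod_div_prod hrec' hwd' 0 (m + 1)
  have h1 := SecondOrderRecurrence.eq_prod_div_prod hrec' hwd' 1 (m + 1)
  have hy0 : y 0 = c := by norm_num [hy, hx2]
  have hy1 : y 1 = a := by norm_num [hy, hx0]
  rw [hy0, hy1] at h0 h1
  -- the factors of the statement are `geomDenom A α (B * a * c) k` unfolded, with `k ≥ 1`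
  refine ⟨?_, ?_⟩
  · rw [show 4 * ((m + 1 : ℕ) : ℤ) - 2 = 2 * ((2 * (m + 1) + 0 : ℕ) : ℤ) - 2 by push_cast; ring,
      ← hy, h0, prod_range_succ', mul_zero, zero_add, geomDenom_zero, mul_one, Nat.add_sub_cancel]
    rfl
  · rw [show 4 * ((m + 1 : ℕ) : ℤ) = 2 * ((2 * (m + 1) + 1 : ℕ) : ℤ) - 2 by push_cast; ring,
      ← hy, h1]
    rfl

/-- Explicit formula for the subsequences `x_{4n-2}` and `x_{4n}` of a well-defined
solution of `x_{n+1} = α x_{n-3} / (A + B x_{n-1} x_{n-3})`. -/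
theorem stmt_1 (α A B a b c d : ℝ) (hα : α ≠ 0) (hB : B ≠ 0)
    (ha : a ≠ 0) (hb : b ≠ 0) (hc : c ≠ 0) (hd : d ≠ 0)
    (x : ℤ → ℝ)
    (hx3 : x (-3) = d) (hx2 : x (-2) = c) (hx1 : x (-1) = b) (hx0 : x 0 = a)
    (hwd : ∀ n : ℤ, 0 ≤ n → A + B * x (n - 1) * x (n - 3) ≠ 0)
    (hrec : ∀ n : ℤ, 0 ≤ n →
      x (n + 1) = α * x (n - 3) / (A + B * x (n - 1) * x (n - 3))) :
    ∀ n : ℕ, 1 ≤ n →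
      x (4 * (n : ℤ) - 2) =
        c * α ^ n *
          (∏ p ∈ Finset.range (n - 1),
            (A ^ (2 * p + 2) +
              B * a * c * ∑ i ∈ Finset.range (2 * p + 2), A ^ i * α ^ (2 * p + 1 - i))) /
          (∏ p ∈ Finset.range n,
            (A ^ (2 * p + 1) +
              B * a * c * ∑ i ∈ Finset.range (2 * p + 1), A ^ i * α ^ (2 * p - i))) ∧
      x (4 * (n : ℤ)) =
        a * α ^ n *
          (∏ p ∈ Finset.range n,
            (A ^ (2 * p + 1) +
              B * a * c * ∑ i ∈ Finset.range (2 * p + 1), A ^ i * α ^ (2 * p - i))) /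
          (∏ p ∈ Finset.range n,
            (A ^ (2 * p + 2) +
              B * a * c * ∑ i ∈ Finset.range (2 * p + 2), A ^ i * α ^ (2 * p + 1 - i))) :=
  stmt_1_general α A B a c x hx2 hx0 hwd hrec
end

section
/- Assume A ≠ α, and let (x_n)_{n≥-3} be a well-defined solution of the difference equation. Then for all integers n ≥ 1: x_{4n-3} = d·α^n·(A−α)·∏_{p=0}^{n-2} P_{2p+2}(b,d) / ∏_{p=0}^{n-1} P_{2p+1}(b,d), and x_{4n-1} = b·α^n·∏_{p=0}^{n-1} P_{2p+1}(b,d) / ∏_{p=0}^{n-1} P_{2p+2}(b,d), where P_k(u,v) = A^k·(A − α + B·u·v) − B·u·v·α^k. -/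
open Filter Finset

/-!
Along each parity class the equation is the second-order recurrence
`u (k + 2) = α u k / (A + B u (k + 1) u k)`, and the product `w k = u (k + 1) u k` of two
consecutive terms then satisfies the Riccati equation `w (k + 1) = α w k / (A + B w k)`, which
linearises: `w k = w 0 α^k (A - α) / P k` with `P k = A^k (A - α + B w 0) - B w 0 α^k`, because
`A P k + B w 0 α^k (A - α) = P (k + 1)`. Hence `A + B w k = P (k + 1) / P k`, so
`u (k + 2) = α u k P k / P (k + 1)`, and the formulas follow by telescoping in steps of two.
-/

section Riccati

variable {K : Type*} [Field K] (α A B w : K)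

def riccatiDenom (k : ℕ) : K := A ^ k * (A - α + B * w) - B * w * α ^ k

@[simp]
lemma riccatiDenom_zero : riccatiDenom α A B w 0 = A - α := by
  simp [riccatiDenom]

lemma riccatiDenom_succ (k : ℕ) :
    riccatiDenom α A B w (k + 1) = A * riccatiDenom α A B w k + B * w * α ^ k * (A - α) := by
  simp only [riccatiDenom]
  ring

variable {α A B w}

lemma add_mul_riccati_closed_form {k : ℕ} (hPk : riccatiDenom α A B w k ≠ 0) :
    A + B * (w * α ^ k * (A - α) / riccatiDenom α A B w k) =
      riccatiDenom α A B w (k + 1) / riccatiDenom α A B w k := by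
  rw [riccatiDenom_succ]
  field_simp

lemma riccati_closed_form {w : ℕ → K} (hAα : A ≠ α) (hden : ∀ k, A + B * w k ≠ 0)
    (hrec : ∀ k, w (k + 1) = α * w k / (A + B * w k)) (k : ℕ) :
    riccatiDenom α A B (w 0) k ≠ 0 ∧
      w k = w 0 * α ^ k * (A - α) / riccatiDenom α A B (w 0) k := by
  have hA0 : A - α ≠ 0 := sub_ne_zero.mpr hAα
  induction k with
  | zero => simp [hA0]
  | succ k ih =>
    obtain ⟨hPk, hwk⟩ := ih
    have hden_k := add_mul_riccati_closed_form (α := α) (B := B) hPk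
    rw [← hwk] at hden_k
    have hPk1 : riccatiDenom α A B (w 0) (k + 1) ≠ 0 := by
      simpa [hden_k, hPk] using hden k
    refine ⟨hPk1, ?_⟩
    rw [hrec, hden_k, hwk]
    field_simp
    ring

lemma second_order_step {u : ℕ → K} (hAα : A ≠ α)
    (hden : ∀ k, A + B * u (k + 1) * u k ≠ 0)
    (hrec : ∀ k, u (k + 2) = α * u k / (A + B * u (k + 1) * u k)) (k : ℕ) :
    u (k + 2) = α * u k * riccatiDenom α A B (u 1 * u 0) k /
      riccatiDenom α A B (u 1 * u 0) (k + 1) := by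
  set w : ℕ → K := fun k => u (k + 1) * u k
  have hden_w (k : ℕ) : A + B * w k ≠ 0 := by simpa [w, mul_assoc] using hden k
  have hrec_w (k : ℕ) : w (k + 1) = α * w k / (A + B * w k) := by
    simp only [w, hrec, ← mul_assoc]
    ring
  obtain ⟨hPk, hwk⟩ := riccati_closed_form hAα hden_w hrec_w k
  have hden_k := add_mul_riccati_closed_form (α := α) (B := B) hPk
  rw [← hwk] at hden_k
  rw [hrec, mul_assoc B, hden_k]
  field_simp
  rfl

lemma eq_mul_pow_mul_prod_of_step {M : Type*} [CommMonoid M] {u r : ℕ → M} {α : M}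
    (hstep : ∀ k, u (k + 2) = α * u k * r k) (k m : ℕ) :
    u (k + 2 * m) = u k * α ^ m * ∏ p ∈ range m, r (k + 2 * p) := by
  induction m with
  | zero => simp
  | succ m ih =>
    rw [show k + 2 * (m + 1) = k + 2 * m + 2 by ring, hstep, ih, prod_range_succ, pow_succ]
    ac_rfl

lemma second_order_closed_form {u : ℕ → K} (hAα : A ≠ α)
    (hden : ∀ k, A + B * u (k + 1) * u k ≠ 0)
    (hrec : ∀ k, u (k + 2) = α * u k / (A + B * u (k + 1) * u k)) (k m : ℕ) :
    u (k + 2 * m) = u k * α ^ m * ∏ p ∈ range m,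
      riccatiDenom α A B (u 1 * u 0) (k + 2 * p) /
        riccatiDenom α A B (u 1 * u 0) (k + 2 * p + 1) := by
  refine eq_mul_pow_mul_prod_of_step (r := fun j => riccatiDenom α A B (u 1 * u 0) j /
    riccatiDenom α A B (u 1 * u 0) (j + 1)) (fun j => ?_) k m
  rw [second_order_step hAα hden hrec]
  ring

lemma odd_terms_closed_form {x : ℤ → K} (hAα : A ≠ α)
    (hwd : ∀ n : ℤ, 0 ≤ n → A + B * x (n - 1) * x (n - 3) ≠ 0)
    (hrec : ∀ n : ℤ, 0 ≤ n → x (n + 1) = α * x (n - 3) / (A + B * x (n - 1) * x (n - 3)))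
    (k m : ℕ) :
    x (2 * ((k + 2 * m : ℕ) : ℤ) - 3) = x (2 * k - 3) * α ^ m * ∏ p ∈ range m,
      riccatiDenom α A B (x (-1) * x (-3)) (k + 2 * p) /
        riccatiDenom α A B (x (-1) * x (-3)) (k + 2 * p + 1) := by
  set u : ℕ → K := fun k => x (2 * k - 3)
  have hu_rec (k : ℕ) : u (k + 2) = α * u k / (A + B * u (k + 1) * u k) := by
    convert hrec (2 * k) (by positivity) using 2 <;> push_cast [u] <;> ring_nf
  have hu_den (k : ℕ) : A + B * u (k + 1) * u k ≠ 0 := by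
    convert hwd (2 * k) (by positivity) using 3
    push_cast [u]
    ring_nf
  convert second_order_closed_form hAα hu_den hu_rec k m using 5 <;> norm_num [u]

end Riccati

theorem stmt_2_general (α A B b d : ℝ) (hAα : A ≠ α)
    (x : ℤ → ℝ)
    (hx3 : x (-3) = d) (hx1 : x (-1) = b)
    (hwd : ∀ n : ℤ, 0 ≤ n → A + B * x (n - 1) * x (n - 3) ≠ 0)
    (hrec : ∀ n : ℤ, 0 ≤ n →
      x (n + 1) = α * x (n - 3) / (A + B * x (n - 1) * x (n - 3)))
    (P : ℕ → ℝ → ℝ → ℝ)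
    (hP : ∀ (k : ℕ) (u v : ℝ),
      P k u v = A ^ k * (A - α + B * u * v) - B * u * v * α ^ k) :
    ∀ n : ℕ, 1 ≤ n →
      x (4 * (n : ℤ) - 3) =
        d * α ^ n * (A - α) * (∏ p ∈ Finset.range (n - 1), P (2 * p + 2) b d) /
          (∏ p ∈ Finset.range n, P (2 * p + 1) b d) ∧
      x (4 * (n : ℤ) - 1) =
        b * α ^ n * (∏ p ∈ Finset.range n, P (2 * p + 1) b d) /
          (∏ p ∈ Finset.range n, P (2 * p + 2) b d) := by
  have hP_eq : riccatiDenom α A B (x (-1) * x (-3)) = fun k => P k b d := by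
    ext k
    rw [hx1, hx3, riccatiDenom, hP]
    ring
  have hx := odd_terms_closed_form hAα hwd hrec
  simp only [hP_eq] at hx
  have hP0 : P 0 b d = A - α := by
    rw [hP]
    ring
  rintro n hn
  obtain ⟨m, rfl⟩ := Nat.exists_eq_add_of_le' hn
  constructor
  · have hx_eq : x (4 * ((m + 1 : ℕ) : ℤ) - 3) = x (2 * ((0 + 2 * (m + 1) : ℕ) : ℤ) - 3) :=
      congrArg x (by push_cast; ring)
    rw [hx_eq, hx, show 2 * ((0 : ℕ) : ℤ) - 3 = -3 by norm_num, hx3, prod_div_distrib,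
      prod_range_succ' (fun p => P (0 + 2 * p) b d)]
    simp only [hP0, mul_add, mul_one, zero_add, mul_zero, add_zero, add_tsub_cancel_right]
    ring
  · have hx_eq : x (4 * ((m + 1 : ℕ) : ℤ) - 1) = x (2 * ((1 + 2 * (m + 1) : ℕ) : ℤ) - 3) :=
      congrArg x (by push_cast; ring)
    rw [hx_eq, hx, show 2 * ((1 : ℕ) : ℤ) - 3 = -1 by norm_num, hx1, prod_div_distrib]
    simp only [add_comm 1, add_assoc, Nat.reduceAdd]
    ring

/-- Simplified formula (case `A ≠ α`) for the subsequences `x_{4n-3}` and `x_{4n-1}`,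
where `P k u v = A^k (A - α + B u v) - B u v α^k`. -/
theorem stmt_2 (α A B a b c d : ℝ) (hα : α ≠ 0) (hB : B ≠ 0) (hAα : A ≠ α)
    (ha : a ≠ 0) (hb : b ≠ 0) (hc : c ≠ 0) (hd : d ≠ 0)
    (x : ℤ → ℝ)
    (hx3 : x (-3) = d) (hx2 : x (-2) = c) (hx1 : x (-1) = b) (hx0 : x 0 = a)
    (hwd : ∀ n : ℤ, 0 ≤ n → A + B * x (n - 1) * x (n - 3) ≠ 0)
    (hrec : ∀ n : ℤ, 0 ≤ n →
      x (n + 1) = α * x (n - 3) / (A + B * x (n - 1) * x (n - 3)))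
    (P : ℕ → ℝ → ℝ → ℝ)
    (hP : ∀ (k : ℕ) (u v : ℝ),
      P k u v = A ^ k * (A - α + B * u * v) - B * u * v * α ^ k) :
    ∀ n : ℕ, 1 ≤ n →
      x (4 * (n : ℤ) - 3) =
        d * α ^ n * (A - α) * (∏ p ∈ Finset.range (n - 1), P (2 * p + 2) b d) /
          (∏ p ∈ Finset.range n, P (2 * p + 1) b d) ∧
      x (4 * (n : ℤ) - 1) =
        b * α ^ n * (∏ p ∈ Finset.range n, P (2 * p + 1) b d) /
          (∏ p ∈ Finset.range n, P (2 * p + 2) b d) :=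
  stmt_2_general α A B b d hAα x hx3 hx1 hwd hrec P hP
end

section
/- Assume A = α, and let (x_n)_{n≥-3} be a well-defined solution of the difference equation. Then for all integers n ≥ 1: x_{4n-3} = d·A·∏_{p=0}^{n-2}( A + (2p+2)·B·b·d ) / ∏_{p=0}^{n-1}( A + (2p+1)·B·b·d ), and x_{4n-1} = b·∏_{p=0}^{n-1}( A + (2p+1)·B·b·d ) / ∏_{p=0}^{n-1}( A + (2p+2)·B·b·d ). -/
/-!
Along the odd indices the equation decouples: `u m := x (2 m - 3)` satisfies
`u (m + 2) = A u m / (A + B u (m + 1) u m)` when `A = α`. Inverting shows that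
`1 / (u m u (m + 1))` grows by `B / A` at each step, so `u m u (m + 1) = A b d / (A + m B b d)`.
Substituting this back gives `u (m + 2) (A + (m + 1) B b d) = u m (A + m B b d)`, and the two
closed forms are the telescoping products of this relation along the even and the odd `m`.
The factors `A + m B b d` never vanish, since
`(A + m B b d) (A + B u (m + 1) u m) = A (A + (m + 1) B b d)` and the second factor on the left
is a denominator of the equation.
-/

open Finset

theorem mul_prod_range_eq_of_succ {K : Type*} [CommMonoid K] {s p q : ℕ → K}
    (h : ∀ k, s (k + 1) * q k = s k * p k) (n : ℕ) :
    s n * ∏ k ∈ range n, q k = s 0 * ∏ k ∈ range n, p k := by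
  induction n with
  | zero => simp
  | succ n ih =>
    calc s (n + 1) * ∏ k ∈ range (n + 1), q k
        = (s (n + 1) * q n) * ∏ k ∈ range n, q k := by rw [prod_range_succ]; ac_rfl
      _ = p n * (s n * ∏ k ∈ range n, q k) := by rw [h]; ac_rfl
      _ = s 0 * ∏ k ∈ range (n + 1), p k := by rw [ih, prod_range_succ]; ac_rfl

section Reduced

variable {K : Type*} [Field K] {A B : K} {u : ℕ → K}

theorem reduced_consecutive_mul (hA : A ≠ 0)
    (hu : ∀ m, u (m + 2) * (A + B * u (m + 1) * u m) = A * u m) (m : ℕ) :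
    (A + m * B * u 1 * u 0) * (u (m + 1) * u m) = A * (u 1 * u 0) := by
  induction m with
  | zero => simp
  | succ m ih =>
    refine mul_left_cancel₀ hA ?_
    push_cast
    linear_combination
      (A + m * B * u 1 * u 0) * u (m + 1) * hu m + (A - B * u (m + 2) * u (m + 1)) * ih

theorem reduced_mul_denom (hA : A ≠ 0)
    (hu : ∀ m, u (m + 2) * (A + B * u (m + 1) * u m) = A * u m) (m : ℕ) :
    (A + m * B * u 1 * u 0) * (A + B * u (m + 1) * u m) = A * (A + (m + 1) * B * u 1 * u 0) := by
  linear_combination B * reduced_consecutive_mul hA hu m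

theorem reduced_linear_ne_zero (hA : A ≠ 0)
    (hu : ∀ m, u (m + 2) * (A + B * u (m + 1) * u m) = A * u m)
    (hwd : ∀ m, A + B * u (m + 1) * u m ≠ 0) (m : ℕ) :
    A + m * B * u 1 * u 0 ≠ 0 := by
  induction m with
  | zero => simpa using hA
  | succ m ih =>
    have h := reduced_mul_denom hA hu m
    push_cast
    exact (mul_ne_zero_iff.mp (h ▸ mul_ne_zero ih (hwd m))).2

theorem reduced_step (hA : A ≠ 0)
    (hu : ∀ m, u (m + 2) * (A + B * u (m + 1) * u m) = A * u m) (m : ℕ) :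
    u (m + 2) * (A + (m + 1) * B * u 1 * u 0) = u m * (A + m * B * u 1 * u 0) := by
  refine mul_left_cancel₀ hA ?_
  linear_combination (A + m * B * u 1 * u 0) * hu m - u (m + 2) * reduced_mul_denom hA hu m

theorem reduced_even (hA : A ≠ 0)
    (hu : ∀ m, u (m + 2) * (A + B * u (m + 1) * u m) = A * u m)
    (hwd : ∀ m, A + B * u (m + 1) * u m ≠ 0) (n : ℕ) :
    u (2 * (n + 1)) =
      u 0 * A * (∏ k ∈ range n, (A + (2 * (k : K) + 2) * B * u 1 * u 0)) /
        ∏ k ∈ range (n + 1), (A + (2 * (k : K) + 1) * B * u 1 * u 0) := by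
  have hne : ∏ k ∈ range (n + 1), (A + (2 * (k : K) + 1) * B * u 1 * u 0) ≠ 0 :=
    prod_ne_zero_iff.mpr fun k _ => by
      simpa using reduced_linear_ne_zero hA hu hwd (2 * k + 1)
  have htel := mul_prod_range_eq_of_succ (s := fun k => u (2 * k))
    (q := fun k => A + (2 * (k : K) + 1) * B * u 1 * u 0)
    (p := fun k => A + 2 * (k : K) * B * u 1 * u 0)
    (fun k => by simpa [mul_add, add_assoc, one_add_one_eq_two] using reduced_step hA hu (2 * k))
    (n + 1)
  rw [eq_div_iff hne, htel, prod_range_succ']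
  push_cast
  simp only [mul_zero, zero_mul, add_zero, mul_add, mul_one]
  ring

theorem reduced_odd (hA : A ≠ 0)
    (hu : ∀ m, u (m + 2) * (A + B * u (m + 1) * u m) = A * u m)
    (hwd : ∀ m, A + B * u (m + 1) * u m ≠ 0) (n : ℕ) :
    u (2 * n + 1) =
      u 1 * (∏ k ∈ range n, (A + (2 * (k : K) + 1) * B * u 1 * u 0)) /
        ∏ k ∈ range n, (A + (2 * (k : K) + 2) * B * u 1 * u 0) := by
  have hne : ∏ k ∈ range n, (A + (2 * (k : K) + 2) * B * u 1 * u 0) ≠ 0 :=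
    prod_ne_zero_iff.mpr fun k _ => by
      simpa [add_assoc, one_add_one_eq_two] using reduced_linear_ne_zero hA hu hwd (2 * k + 2)
  have htel := mul_prod_range_eq_of_succ (s := fun k => u (2 * k + 1))
    (q := fun k => A + (2 * (k : K) + 2) * B * u 1 * u 0)
    (p := fun k => A + (2 * (k : K) + 1) * B * u 1 * u 0)
    (fun k => by
      simpa [mul_add, add_assoc, one_add_one_eq_two] using reduced_step hA hu (2 * k + 1))
    n
  rw [eq_div_iff hne]
  simpa using htel

end Reduced

theorem stmt_4_general (α A B b d : ℝ) (hα : α ≠ 0) (hAα : A = α)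
    (x : ℤ → ℝ)
    (hx3 : x (-3) = d) (hx1 : x (-1) = b)
    (hwd : ∀ n : ℤ, 0 ≤ n → A + B * x (n - 1) * x (n - 3) ≠ 0)
    (hrec : ∀ n : ℤ, 0 ≤ n →
      x (n + 1) = α * x (n - 3) / (A + B * x (n - 1) * x (n - 3))) :
    ∀ n : ℕ, 1 ≤ n →
      x (4 * (n : ℤ) - 3) =
        d * A * (∏ p ∈ Finset.range (n - 1), (A + (2 * (p : ℝ) + 2) * B * b * d)) /
          (∏ p ∈ Finset.range n, (A + (2 * (p : ℝ) + 1) * B * b * d)) ∧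
      x (4 * (n : ℤ) - 1) =
        b * (∏ p ∈ Finset.range n, (A + (2 * (p : ℝ) + 1) * B * b * d)) /
          (∏ p ∈ Finset.range n, (A + (2 * (p : ℝ) + 2) * B * b * d)) := by
  subst hAα
  obtain ⟨u, hu_def⟩ : ∃ u : ℕ → ℝ, ∀ m : ℕ, u m = x (2 * m - 3) :=
    ⟨_, fun _ => rfl⟩
  have hu_succ (m : ℕ) : u (m + 1) = x (2 * m - 1) := by
    rw [hu_def]; congr 1; push_cast; ring
  have hu_succ_succ (m : ℕ) : u (m + 2) = x (2 * m + 1) := by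
    rw [hu_def]; congr 1; push_cast; ring
  have hwd' (m : ℕ) : A + B * u (m + 1) * u m ≠ 0 := by
    rw [hu_succ, hu_def]; exact hwd _ (by positivity)
  have hu (m : ℕ) : u (m + 2) * (A + B * u (m + 1) * u m) = A * u m := by
    rw [hu_succ_succ, hu_succ, hu_def, hrec _ (by positivity),
      div_mul_cancel₀ _ (hwd _ (by positivity))]
  have hu0 : u 0 = d := by simpa [hu_def] using hx3
  have hu1 : u 1 = b := by simpa [hu_def] using hx1
  intro n hn
  obtain ⟨n, rfl⟩ := Nat.exists_eq_add_of_le' hn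
  have hx_even : x (4 * ((n + 1 : ℕ) : ℤ) - 3) = u (2 * (n + 1)) := by
    rw [hu_def]; congr 1; push_cast; ring
  have hx_odd : x (4 * ((n + 1 : ℕ) : ℤ) - 1) = u (2 * (n + 1) + 1) := by
    rw [hu_def]; congr 1; push_cast; ring
  rw [hx_even, hx_odd, reduced_even hα hu hwd', reduced_odd hα hu hwd', hu0, hu1,
    Nat.add_sub_cancel]
  exact ⟨rfl, rfl⟩

/-- Case `A = α`: formulas for `x_{4n-3}` and `x_{4n-1}`. -/
theorem stmt_4 (α A B a b c d : ℝ) (hα : α ≠ 0) (hB : B ≠ 0) (hAα : A = α)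
    (ha : a ≠ 0) (hb : b ≠ 0) (hc : c ≠ 0) (hd : d ≠ 0)
    (x : ℤ → ℝ)
    (hx3 : x (-3) = d) (hx2 : x (-2) = c) (hx1 : x (-1) = b) (hx0 : x 0 = a)
    (hwd : ∀ n : ℤ, 0 ≤ n → A + B * x (n - 1) * x (n - 3) ≠ 0)
    (hrec : ∀ n : ℤ, 0 ≤ n →
      x (n + 1) = α * x (n - 3) / (A + B * x (n - 1) * x (n - 3))) :
    ∀ n : ℕ, 1 ≤ n →
      x (4 * (n : ℤ) - 3) =
        d * A * (∏ p ∈ Finset.range (n - 1), (A + (2 * (p : ℝ) + 2) * B * b * d)) /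
          (∏ p ∈ Finset.range n, (A + (2 * (p : ℝ) + 1) * B * b * d)) ∧
      x (4 * (n : ℤ) - 1) =
        b * (∏ p ∈ Finset.range n, (A + (2 * (p : ℝ) + 1) * B * b * d)) /
          (∏ p ∈ Finset.range n, (A + (2 * (p : ℝ) + 2) * B * b * d)) :=
  stmt_4_general α A B b d hα hAα x hx3 hx1 hwd hrec
end

section
/- Assume A = α, and let (x_n)_{n≥-3} be a well-defined solution of the difference equation. Then for all integers n ≥ 1: x_{4n-2} = c·A·∏_{p=0}^{n-2}( A + (2p+2)·B·a·c ) / ∏_{p=0}^{n-1}( A + (2p+1)·B·a·c ), and x_{4n} = a·∏_{p=0}^{n-1}( A + (2p+1)·B·a·c ) / ∏_{p=0}^{n-1}( A + (2p+2)·B·a·c ). -/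
/-!
Write `z k = x (2k - 2)` for the even-indexed terms; they satisfy the second-order recurrence
`z (k+2) = A z k / (A + B z (k+1) z k)`. With `D k = A + k B a c`, the product
`z (k+1) z k D k` is conserved, equal to `A a c`, and this gives
`(A + B z (k+1) z k) D k = A D (k+1)`. Hence `z (k+2) = z k D k / D (k+1)`, and the formulas
follow by telescoping along each parity class.
-/

open Finset

section Telescoping

variable {K : Type*} [Field K]

theorem eq_mul_prod_div_prod_of_add_two {u D : ℕ → K}
    (h : ∀ k, u (k + 2) = u k * D k / D (k + 1)) (j n : ℕ) :
    u (2 * n + j) =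
      u j * (∏ p ∈ range n, D (2 * p + j)) / ∏ p ∈ range n, D (2 * p + j + 1) := by
  induction n with
  | zero => simp
  | succ n ih =>
    rw [show 2 * (n + 1) + j = 2 * n + j + 2 by ring, h, ih, prod_range_succ, prod_range_succ]
    ring

end Telescoping

namespace RationalRecurrence

variable {K : Type*} [Field K] {A B : K} {z : ℕ → K}

theorem succ_mul_mul_eq (hwd : ∀ k, A + B * z (k + 1) * z k ≠ 0)
    (hrec : ∀ k, z (k + 2) = A * z k / (A + B * z (k + 1) * z k)) (k : ℕ) :
    z (k + 1) * z k * (A + k * B * z 1 * z 0) = A * z 1 * z 0 := by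
  induction k with
  | zero => simp only [Nat.cast_zero, zero_mul, add_zero, zero_add]; ring
  | succ k ih =>
    rw [hrec, div_mul_eq_mul_div, div_mul_eq_mul_div, div_eq_iff (hwd k)]
    push_cast
    linear_combination A * ih

theorem denom_mul_eq (hwd : ∀ k, A + B * z (k + 1) * z k ≠ 0)
    (hrec : ∀ k, z (k + 2) = A * z k / (A + B * z (k + 1) * z k)) (k : ℕ) :
    (A + k * B * z 1 * z 0) * (A + B * z (k + 1) * z k) =
      A * (A + ((k + 1 : ℕ) : K) * B * z 1 * z 0) := by
  push_cast
  linear_combination B * succ_mul_mul_eq hwd hrec k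

theorem linear_ne_zero (hA : A ≠ 0) (hwd : ∀ k, A + B * z (k + 1) * z k ≠ 0)
    (hrec : ∀ k, z (k + 2) = A * z k / (A + B * z (k + 1) * z k)) (k : ℕ) :
    A + k * B * z 1 * z 0 ≠ 0 := by
  induction k with
  | zero => simpa using hA
  | succ k ih =>
    have h := denom_mul_eq hwd hrec k
    exact right_ne_zero_of_mul (h ▸ mul_ne_zero ih (hwd k))

theorem add_two_eq (hA : A ≠ 0) (hwd : ∀ k, A + B * z (k + 1) * z k ≠ 0)
    (hrec : ∀ k, z (k + 2) = A * z k / (A + B * z (k + 1) * z k)) (k : ℕ) :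
    z (k + 2) = z k * (A + k * B * z 1 * z 0) / (A + ((k + 1 : ℕ) : K) * B * z 1 * z 0) := by
  rw [hrec, div_eq_div_iff (hwd k) (linear_ne_zero hA hwd hrec (k + 1))]
  linear_combination -z k * denom_mul_eq hwd hrec k

theorem odd_eq (hA : A ≠ 0) (hwd : ∀ k, A + B * z (k + 1) * z k ≠ 0)
    (hrec : ∀ k, z (k + 2) = A * z k / (A + B * z (k + 1) * z k)) (n : ℕ) :
    z (2 * n + 1) = z 1 * (∏ p ∈ range n, (A + (2 * (p : K) + 1) * B * z 1 * z 0)) /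
      ∏ p ∈ range n, (A + (2 * (p : K) + 2) * B * z 1 * z 0) := by
  rw [eq_mul_prod_div_prod_of_add_two (add_two_eq hA hwd hrec) 1 n]
  push_cast
  simp only [add_assoc, one_add_one_eq_two]

theorem even_eq (hA : A ≠ 0) (hwd : ∀ k, A + B * z (k + 1) * z k ≠ 0)
    (hrec : ∀ k, z (k + 2) = A * z k / (A + B * z (k + 1) * z k)) (n : ℕ) :
    z (2 * n + 2) = z 0 * A * (∏ p ∈ range n, (A + (2 * (p : K) + 2) * B * z 1 * z 0)) /
      ∏ p ∈ range (n + 1), (A + (2 * (p : K) + 1) * B * z 1 * z 0) := by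
  have h := eq_mul_prod_div_prod_of_add_two (add_two_eq hA hwd hrec) 0 (n + 1)
  rw [prod_range_succ'] at h
  simp only [Nat.cast_add, Nat.cast_mul, Nat.cast_ofNat, Nat.cast_one, Nat.cast_zero, mul_add,
    mul_one, mul_zero, zero_mul, add_zero] at h
  rw [h]
  ring

end RationalRecurrence

theorem stmt_5_general (α A B a c : ℝ) (hα : α ≠ 0) (hAα : A = α)
    (x : ℤ → ℝ)
    (hx2 : x (-2) = c) (hx0 : x 0 = a)
    (hwd : ∀ n : ℤ, 0 ≤ n → A + B * x (n - 1) * x (n - 3) ≠ 0)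
    (hrec : ∀ n : ℤ, 0 ≤ n →
      x (n + 1) = α * x (n - 3) / (A + B * x (n - 1) * x (n - 3))) :
    ∀ n : ℕ, 1 ≤ n →
      x (4 * (n : ℤ) - 2) =
        c * A * (∏ p ∈ Finset.range (n - 1), (A + (2 * (p : ℝ) + 2) * B * a * c)) /
          (∏ p ∈ Finset.range n, (A + (2 * (p : ℝ) + 1) * B * a * c)) ∧
      x (4 * (n : ℤ)) =
        a * (∏ p ∈ Finset.range n, (A + (2 * (p : ℝ) + 1) * B * a * c)) /
          (∏ p ∈ Finset.range n, (A + (2 * (p : ℝ) + 2) * B * a * c)) := by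
  subst hAα
  set z : ℕ → ℝ := fun k ↦ x (2 * k - 2) with hz
  have hz0 : z 0 = c := by simpa [hz] using hx2
  have hz1 : z 1 = a := by simpa [hz] using hx0
  have hzwd : ∀ k, A + B * z (k + 1) * z k ≠ 0 := fun k ↦ by
    simpa [hz, mul_add, sub_eq_add_neg, add_assoc] using hwd (2 * k + 1) (by positivity)
  have hzrec : ∀ k, z (k + 2) = A * z k / (A + B * z (k + 1) * z k) := fun k ↦ by
    have h := hrec (2 * k + 1) (by positivity)
    simp only [hz]
    push_cast
    convert h using 2 <;> ring_nf
  intro n hn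
  obtain ⟨m, rfl⟩ : ∃ m, n = m + 1 := ⟨n - 1, by omega⟩
  have h4n2 : x (4 * ((m + 1 : ℕ) : ℤ) - 2) = z (2 * m + 2) := by
    simp only [hz]; push_cast; ring_nf
  have h4n : x (4 * ((m + 1 : ℕ) : ℤ)) = z (2 * (m + 1) + 1) := by
    simp only [hz]; push_cast; ring_nf
  rw [h4n2, h4n, RationalRecurrence.even_eq hα hzwd hzrec,
    RationalRecurrence.odd_eq hα hzwd hzrec, hz0, hz1, Nat.add_sub_cancel]
  exact ⟨rfl, rfl⟩

/-- Case `A = α`: formulas for `x_{4n-2}` and `x_{4n}`. -/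
theorem stmt_5 (α A B a b c d : ℝ) (hα : α ≠ 0) (hB : B ≠ 0) (hAα : A = α)
    (ha : a ≠ 0) (hb : b ≠ 0) (hc : c ≠ 0) (hd : d ≠ 0)
    (x : ℤ → ℝ)
    (hx3 : x (-3) = d) (hx2 : x (-2) = c) (hx1 : x (-1) = b) (hx0 : x 0 = a)
    (hwd : ∀ n : ℤ, 0 ≤ n → A + B * x (n - 1) * x (n - 3) ≠ 0)
    (hrec : ∀ n : ℤ, 0 ≤ n →
      x (n + 1) = α * x (n - 3) / (A + B * x (n - 1) * x (n - 3))) :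
    ∀ n : ℕ, 1 ≤ n →
      x (4 * (n : ℤ) - 2) =
        c * A * (∏ p ∈ Finset.range (n - 1), (A + (2 * (p : ℝ) + 2) * B * a * c)) /
          (∏ p ∈ Finset.range n, (A + (2 * (p : ℝ) + 1) * B * a * c)) ∧
      x (4 * (n : ℤ)) =
        a * (∏ p ∈ Finset.range n, (A + (2 * (p : ℝ) + 1) * B * a * c)) /
          (∏ p ∈ Finset.range n, (A + (2 * (p : ℝ) + 2) * B * a * c)) :=
  stmt_5_general α A B a c hα hAα x hx2 hx0 hwd hrec
end

section
/- Assume A = α, A/(B·b·d) > 0 and A/(B·a·c) > 0, and let (x_n)_{n≥-3} be a well-defined solution of the difference equation. Then for all integers n ≥ 1, writing Γ for the real Gamma function: x_{4n-3} = A·2^{2n-2}·Γ(A/(2Bbd)+n)^2·Γ(A/(Bbd)+1) / ( B·b·Γ(A/(2Bbd)+1)^2·Γ(A/(Bbd)+2n) ); x_{4n-2} = A·2^{2n-2}·Γ(A/(2Bac)+n)^2·Γ(A/(Bac)+1) / ( B·a·Γ(A/(2Bac)+1)^2·Γ(A/(Bac)+2n) ); x_{4n-1} = b·Γ(A/(Bbd)+2n+1)·Γ(A/(2Bbd)+1)^2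 / ( 2^{2n}·Γ(A/(Bbd)+1)·Γ(A/(2Bbd)+n+1)^2 ); x_{4n} = a·Γ(A/(Bac)+2n+1)·Γ(A/(2Bac)+1)^2 / ( 2^{2n}·Γ(A/(Bac)+1)·Γ(A/(2Bac)+n+1)^2 ). -/
open Finset Real

/-! With `α = A` the equation splits into two interleaved copies of
`y (k + 2) = A * y k / (A + B * y (k + 1) * y k)`, namely `y k = x (2k - 3)` and `y k = x (2k - 2)`.
For such `y` the reciprocal `A / (B * y (k + 1) * y k)` grows by exactly `1` per step, so it equals
`s + k` with `s = A / (B * y 1 * y 0) > 0`. Hence `y (k + 2) = y k * (s + k) / (s + k + 1)`, and the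
products of these ratios over every other index are quotients of Gamma values. -/

theorem eq_mul_prod_range_of_two_step {y r : ℕ → ℝ} (hy : ∀ k, y (k + 2) = y k * r k)
    (i n : ℕ) :
    y (2 * n + i) = y i * ∏ j ∈ range n, r (2 * j + i) := by
  induction n with
  | zero => simp
  | succ n ih =>
    rw [prod_range_succ, ← mul_assoc, ← ih, ← hy]
    congr 1
    ring

theorem prod_range_even_ratio_eq_Gamma {h : ℝ} (hh : 0 < h) (n : ℕ) :
    ∏ j ∈ range n, (2 * h + 2 * j) / (2 * h + 2 * j + 1) =
      2 ^ (2 * n) * Gamma (h + n) ^ 2 * Gamma (2 * h) / (Gamma h ^ 2 * Gamma (2 * h + 2 * n)) := by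
  induction n with
  | zero =>
    have := (Gamma_pos_of_pos hh).ne'
    have := (Gamma_pos_of_pos (by positivity : 0 < 2 * h)).ne'
    field_simp; simp
  | succ n ih =>
    have hΓh := (Gamma_pos_of_pos hh).ne'
    have hΓ := (Gamma_pos_of_pos (by positivity : 0 < 2 * h + 2 * n)).ne'
    have hn : h + n ≠ 0 := by positivity
    have hn' : 2 * h + 2 * n + 1 ≠ 0 := by positivity
    rw [prod_range_succ, ih]
    push_cast
    rw [show h + (n + 1) = h + n + 1 by ring, Gamma_add_one hn,
      show 2 * h + 2 * (n + 1) = 2 * h + 2 * n + 1 + 1 by ring, Gamma_add_one hn',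
      Gamma_add_one (by positivity : 2 * h + 2 * n ≠ 0), pow_succ, pow_succ]
    field_simp
    ring

theorem prod_range_odd_ratio_eq_Gamma {h : ℝ} (hh : 0 < h) (n : ℕ) :
    ∏ j ∈ range n, (2 * h + 2 * j + 1) / (2 * h + 2 * j + 2) =
      Gamma (2 * h + 2 * n + 1) * Gamma (h + 1) ^ 2 /
        (2 ^ (2 * n) * Gamma (2 * h + 1) * Gamma (h + n + 1) ^ 2) := by
  induction n with
  | zero =>
    have := (Gamma_pos_of_pos (by positivity : 0 < h + 1)).ne'
    have := (Gamma_pos_of_pos (by positivity : 0 < 2 * h + 1)).ne'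
    field_simp; simp
  | succ n ih =>
    have hΓh := (Gamma_pos_of_pos (by positivity : 0 < h + 1)).ne'
    have hΓh' := (Gamma_pos_of_pos (by positivity : 0 < 2 * h + 1)).ne'
    have hΓ := (Gamma_pos_of_pos (by positivity : 0 < h + n + 1)).ne'
    have hn : h + n + 1 ≠ 0 := by positivity
    have hn' : 2 * h + 2 * n + 1 + 1 ≠ 0 := by positivity
    rw [prod_range_succ, ih]
    push_cast
    rw [show h + (n + 1) + 1 = h + n + 1 + 1 by ring, Gamma_add_one hn,
      show 2 * h + 2 * (n + 1) + 1 = 2 * h + 2 * n + 1 + 1 + 1 by ring, Gamma_add_one hn',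
      Gamma_add_one (by positivity : 2 * h + 2 * n + 1 ≠ 0), pow_succ, pow_succ]
    field_simp
    ring

section SecondOrder

variable {A B s : ℝ} {y : ℕ → ℝ}

theorem consecutive_mul_mul_add_eq (hrec : ∀ k, y (k + 2) = A * y k / (A + B * y (k + 1) * y k))
    (hs : 0 < s) (hA : A ≠ 0) (hy : B * y 1 * y 0 * s = A) (k : ℕ) :
    B * y (k + 1) * y k * (s + k) = A := by
  induction k with
  | zero => simpa using hy
  | succ k ih =>
    have hden : A + B * y (k + 1) * y k ≠ 0 := by
      intro h0
      have : A * (s + k + 1) = 0 := by linear_combination (s + k) * h0 - ih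
      exact mul_ne_zero hA (by positivity) this
    have hnext : y (k + 2) * (A + B * y (k + 1) * y k) = A * y k := by
      rw [hrec k]; exact div_mul_cancel₀ _ hden
    apply mul_right_cancel₀ hden
    push_cast
    linear_combination B * y (k + 1) * (s + k + 1) * hnext + A * ih

theorem two_step_eq_mul_div (hrec : ∀ k, y (k + 2) = A * y k / (A + B * y (k + 1) * y k))
    (hs : 0 < s) (hA : A ≠ 0) (hy : B * y 1 * y 0 * s = A) (k : ℕ) :
    y (k + 2) = y k * ((s + k) / (s + k + 1)) := by
  have hk := consecutive_mul_mul_add_eq hrec hs hA hy k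
  have hk1 := consecutive_mul_mul_add_eq hrec hs hA hy (k + 1)
  have hBy : B * y (k + 1) ≠ 0 := by rintro h; simp [h, hA.symm] at hk
  rw [mul_div_assoc', eq_div_iff (by positivity)]
  apply mul_left_cancel₀ hBy
  push_cast at hk1
  linear_combination hk1 - hk

theorem two_step_eq_mul_div_of_pos
    (hrec : ∀ k, y (k + 2) = A * y k / (A + B * y (k + 1) * y k))
    (hpos : 0 < A / (B * y 1 * y 0)) (k : ℕ) :
    y (k + 2) = y k * ((A / (B * y 1 * y 0) + k) / (A / (B * y 1 * y 0) + k + 1)) := by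
  have hA : A ≠ 0 := by rintro rfl; simp at hpos
  have hBy : B * y 1 * y 0 ≠ 0 := by rintro h; simp [h] at hpos
  exact two_step_eq_mul_div hrec hpos hA (mul_div_cancel₀ A hBy) k

theorem two_mul_eq_Gamma (hrec : ∀ k, y (k + 2) = A * y k / (A + B * y (k + 1) * y k))
    (hpos : 0 < A / (B * y 1 * y 0)) {n : ℕ} (hn : 1 ≤ n) :
    y (2 * n) =
      A * 2 ^ (2 * n - 2) * Gamma (A / (2 * B * y 1 * y 0) + n) ^ 2 *
          Gamma (A / (B * y 1 * y 0) + 1) /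
        (B * y 1 * Gamma (A / (2 * B * y 1 * y 0) + 1) ^ 2 *
          Gamma (A / (B * y 1 * y 0) + 2 * n)) := by
  have hBy : B * y 1 * y 0 ≠ 0 := by rintro h; simp [h] at hpos
  have hstep := two_step_eq_mul_div_of_pos hrec hpos
  have hs : A / (B * y 1 * y 0) = 2 * (A / (2 * B * y 1 * y 0)) := by field_simp
  generalize A / (2 * B * y 1 * y 0) = h at *
  rw [hs] at hpos hstep ⊢
  have hh : 0 < h := by linarith
  have hA : A = 2 * h * (B * y 1 * y 0) := by rw [← hs, div_mul_cancel₀ A hBy]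
  have hprod := eq_mul_prod_range_of_two_step hstep 0 n
  simp only [add_zero, Nat.cast_mul, Nat.cast_ofNat] at hprod
  rw [hprod, prod_range_even_ratio_eq_Gamma hh, Gamma_add_one hh.ne',
    Gamma_add_one (by positivity : 2 * h ≠ 0)]
  obtain ⟨m, rfl⟩ : ∃ m, n = m + 1 := ⟨n - 1, by omega⟩
  rw [show 2 * (m + 1) - 2 = 2 * m by omega, show 2 * (m + 1) = 2 * m + 2 by ring]
  have := (Gamma_pos_of_pos hh).ne'
  have := (Gamma_pos_of_pos (by positivity : 0 < 2 * h)).ne'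
  have := (Gamma_pos_of_pos (by positivity : 0 < 2 * h + 2 * (m + 1 : ℕ))).ne'
  have hy1 : y 1 ≠ 0 := by rintro h; simp [h] at hBy
  have hB : B ≠ 0 := by rintro h; simp [h] at hBy
  rw [hA]
  field_simp
  ring

theorem two_mul_add_one_eq_Gamma
    (hrec : ∀ k, y (k + 2) = A * y k / (A + B * y (k + 1) * y k))
    (hpos : 0 < A / (B * y 1 * y 0)) (n : ℕ) :
    y (2 * n + 1) =
      y 1 * Gamma (A / (B * y 1 * y 0) + 2 * n + 1) * Gamma (A / (2 * B * y 1 * y 0) + 1) ^ 2 /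
        (2 ^ (2 * n) * Gamma (A / (B * y 1 * y 0) + 1) *
          Gamma (A / (2 * B * y 1 * y 0) + n + 1) ^ 2) := by
  have hBy : B * y 1 * y 0 ≠ 0 := by rintro h; simp [h] at hpos
  have hstep := two_step_eq_mul_div_of_pos hrec hpos
  have hs : A / (B * y 1 * y 0) = 2 * (A / (2 * B * y 1 * y 0)) := by field_simp
  generalize A / (2 * B * y 1 * y 0) = h at *
  rw [hs] at hpos hstep ⊢
  have hh : 0 < h := by linarith
  rw [eq_mul_prod_range_of_two_step hstep 1 n, mul_assoc, mul_div_assoc,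
    ← prod_range_odd_ratio_eq_Gamma hh]
  congr 1
  refine prod_congr rfl fun j _ => ?_
  push_cast
  ring

end SecondOrder

theorem comp_two_mul_add_rec {α A B : ℝ} {x : ℤ → ℝ}
    (hrec : ∀ n : ℤ, 0 ≤ n → x (n + 1) = α * x (n - 3) / (A + B * x (n - 1) * x (n - 3)))
    {j : ℤ} (hj : -3 ≤ j) (k : ℕ) :
    x (2 * ((k + 2 : ℕ) : ℤ) + j) =
      α * x (2 * (k : ℤ) + j) /
        (A + B * x (2 * ((k + 1 : ℕ) : ℤ) + j) * x (2 * (k : ℤ) + j)) := by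
  have h := hrec (2 * k + j + 3) (by omega)
  rw [show 2 * k + j + 3 + 1 = 2 * ((k + 2 : ℕ) : ℤ) + j by push_cast; ring,
    show 2 * k + j + 3 - 3 = 2 * (k : ℤ) + j by ring,
    show 2 * k + j + 3 - 1 = 2 * ((k + 1 : ℕ) : ℤ) + j by push_cast; ring] at h
  exact h

theorem stmt_6_general (α A B a b c d : ℝ) (hAα : A = α)
    (hpos1 : A / (B * b * d) > 0) (hpos2 : A / (B * a * c) > 0)
    (x : ℤ → ℝ)
    (hx3 : x (-3) = d) (hx2 : x (-2) = c) (hx1 : x (-1) = b) (hx0 : x 0 = a)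
    (hrec : ∀ n : ℤ, 0 ≤ n →
      x (n + 1) = α * x (n - 3) / (A + B * x (n - 1) * x (n - 3))) :
    ∀ n : ℕ, 1 ≤ n →
      x (4 * (n : ℤ) - 3) =
        A * 2 ^ (2 * n - 2) * (Real.Gamma (A / (2 * B * b * d) + n)) ^ 2 *
            Real.Gamma (A / (B * b * d) + 1) /
          (B * b * (Real.Gamma (A / (2 * B * b * d) + 1)) ^ 2 *
            Real.Gamma (A / (B * b * d) + 2 * n)) ∧
      x (4 * (n : ℤ) - 2) =
        A * 2 ^ (2 * n - 2) * (Real.Gamma (A / (2 * B * a * c) + n)) ^ 2 *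
            Real.Gamma (A / (B * a * c) + 1) /
          (B * a * (Real.Gamma (A / (2 * B * a * c) + 1)) ^ 2 *
            Real.Gamma (A / (B * a * c) + 2 * n)) ∧
      x (4 * (n : ℤ) - 1) =
        b * Real.Gamma (A / (B * b * d) + 2 * n + 1) *
            (Real.Gamma (A / (2 * B * b * d) + 1)) ^ 2 /
          (2 ^ (2 * n) * Real.Gamma (A / (B * b * d) + 1) *
            (Real.Gamma (A / (2 * B * b * d) + n + 1)) ^ 2) ∧
      x (4 * (n : ℤ)) =
        a * Real.Gamma (A / (B * a * c) + 2 * n + 1) *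
            (Real.Gamma (A / (2 * B * a * c) + 1)) ^ 2 /
          (2 ^ (2 * n) * Real.Gamma (A / (B * a * c) + 1) *
            (Real.Gamma (A / (2 * B * a * c) + n + 1)) ^ 2) := by
  subst hAα
  intro n hn
  have hodd := comp_two_mul_add_rec hrec (j := -3) le_rfl
  have heven := comp_two_mul_add_rec hrec (j := -2) (by norm_num)
  have hd : x (2 * ((0 : ℕ) : ℤ) + -3) = d := by simpa using hx3
  have hb : x (2 * ((1 : ℕ) : ℤ) + -3) = b := by norm_num [hx1]
  have hc : x (2 * ((0 : ℕ) : ℤ) + -2) = c := by simpa using hx2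
  have ha : x (2 * ((1 : ℕ) : ℤ) + -2) = a := by norm_num [hx0]
  have hpos_odd :
      0 < A / (B * x (2 * ((1 : ℕ) : ℤ) + -3) * x (2 * ((0 : ℕ) : ℤ) + -3)) := by
    rwa [hb, hd]
  have hpos_even :
      0 < A / (B * x (2 * ((1 : ℕ) : ℤ) + -2) * x (2 * ((0 : ℕ) : ℤ) + -2)) := by
    rwa [ha, hc]
  have h1 := two_mul_eq_Gamma (y := fun m : ℕ => x (2 * m + -3)) hodd hpos_odd hn
  have h2 := two_mul_eq_Gamma (y := fun m : ℕ => x (2 * m + -2)) heven hpos_even hn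
  have h3 := two_mul_add_one_eq_Gamma (y := fun m : ℕ => x (2 * m + -3)) hodd hpos_odd n
  have h4 := two_mul_add_one_eq_Gamma (y := fun m : ℕ => x (2 * m + -2)) heven hpos_even n
  simp only [hb, hd, ha, hc] at h1 h2 h3 h4
  refine ⟨?_, ?_, ?_, ?_⟩
  · rw [← h1]; congr 1; push_cast; ring
  · rw [← h2]; congr 1; push_cast; ring
  · rw [← h3]; congr 1; push_cast; ring
  · rw [← h4]; congr 1; push_cast; ring

/-- Case `A = α` with positivity assumptions: Gamma-function formulas for the four
subsequences of a well-defined solution. -/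
theorem stmt_6 (α A B a b c d : ℝ) (hα : α ≠ 0) (hB : B ≠ 0) (hAα : A = α)
    (hpos1 : A / (B * b * d) > 0) (hpos2 : A / (B * a * c) > 0)
    (ha : a ≠ 0) (hb : b ≠ 0) (hc : c ≠ 0) (hd : d ≠ 0)
    (x : ℤ → ℝ)
    (hx3 : x (-3) = d) (hx2 : x (-2) = c) (hx1 : x (-1) = b) (hx0 : x 0 = a)
    (hwd : ∀ n : ℤ, 0 ≤ n → A + B * x (n - 1) * x (n - 3) ≠ 0)
    (hrec : ∀ n : ℤ, 0 ≤ n →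
      x (n + 1) = α * x (n - 3) / (A + B * x (n - 1) * x (n - 3))) :
    ∀ n : ℕ, 1 ≤ n →
      x (4 * (n : ℤ) - 3) =
        A * 2 ^ (2 * n - 2) * (Real.Gamma (A / (2 * B * b * d) + n)) ^ 2 *
            Real.Gamma (A / (B * b * d) + 1) /
          (B * b * (Real.Gamma (A / (2 * B * b * d) + 1)) ^ 2 *
            Real.Gamma (A / (B * b * d) + 2 * n)) ∧
      x (4 * (n : ℤ) - 2) =
        A * 2 ^ (2 * n - 2) * (Real.Gamma (A / (2 * B * a * c) + n)) ^ 2 *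
            Real.Gamma (A / (B * a * c) + 1) /
          (B * a * (Real.Gamma (A / (2 * B * a * c) + 1)) ^ 2 *
            Real.Gamma (A / (B * a * c) + 2 * n)) ∧
      x (4 * (n : ℤ) - 1) =
        b * Real.Gamma (A / (B * b * d) + 2 * n + 1) *
            (Real.Gamma (A / (2 * B * b * d) + 1)) ^ 2 /
          (2 ^ (2 * n) * Real.Gamma (A / (B * b * d) + 1) *
            (Real.Gamma (A / (2 * B * b * d) + n + 1)) ^ 2) ∧
      x (4 * (n : ℤ)) =
        a * Real.Gamma (A / (B * a * c) + 2 * n + 1) *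
            (Real.Gamma (A / (2 * B * a * c) + 1)) ^ 2 /
          (2 ^ (2 * n) * Real.Gamma (A / (B * a * c) + 1) *
            (Real.Gamma (A / (2 * B * a * c) + n + 1)) ^ 2) :=
  stmt_6_general α A B a b c d hAα hpos1 hpos2 x hx3 hx2 hx1 hx0 hrec
end

section
/- Assume |A/α| > 1, A − α + B·b·d ≠ 0 and A − α + B·a·c ≠ 0, and let (x_n)_{n≥-3} be a well-defined solution of the difference equation. Then the solution converges to zero, i.e. x_n → 0 as n → ∞. -/
/-!
The products `p k = x (k - 1) * x (k - 3)` obey `p (k + 2) = α p k / (A + B p k)`, so their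
reciprocals obey the affine recurrence `1 / p (k + 2) = (A / α) / p k + B / α`. Since
`|A / α| > 1` its fixed point `B / (α - A)` is repelling, and the two conditions on the initial
values keep both parity classes off it; hence `1 / p k` blows up and `p k → 0`. Then
`x (k + 1) = α x (k - 3) / (A + B p)` with a denominator tending to `A`, and `|α| < |A|`
makes `x` contract by a fixed factor every four steps.
-/

open Filter Finset

theorem forall_of_forall_lt_of_add {m : ℕ} (hm : 0 < m) {P : ℕ → Prop} (base : ∀ j < m, P j)
    (step : ∀ k, P k → P (k + m)) : ∀ k, P k := by
  intro k
  induction k using Nat.strong_induction_on with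
  | _ k ih =>
    rcases lt_or_ge k m with hk | hk
    · exact base k hk
    · obtain ⟨i, rfl⟩ := Nat.exists_eq_add_of_le' hk
      exact step i (ih i (by omega))

section Contraction

variable {E : Type*} [SeminormedAddCommGroup E] {u : ℕ → E} {m : ℕ} {q : ℝ}

theorem norm_le_mul_pow_div_of_norm_add_le (hm : 0 < m) (hq : 0 ≤ q)
    (h : ∀ k, ‖u (k + m)‖ ≤ q * ‖u k‖) (n : ℕ) :
    ‖u n‖ ≤ (∑ i ∈ range m, ‖u i‖) * q ^ (n / m) := by
  refine forall_of_forall_lt_of_add hm (P := fun n => ‖u n‖ ≤ _ * q ^ (n / m))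
    (fun j hj => ?_) (fun k hk => ?_) n
  · rw [Nat.div_eq_of_lt hj, pow_zero, mul_one]
    exact single_le_sum (fun i _ => norm_nonneg (u i)) (mem_range.2 hj)
  · calc ‖u (k + m)‖ ≤ q * ‖u k‖ := h k
      _ ≤ q * ((∑ i ∈ range m, ‖u i‖) * q ^ (k / m)) := mul_le_mul_of_nonneg_left hk hq
      _ = (∑ i ∈ range m, ‖u i‖) * q ^ ((k + m) / m) := by
        rw [Nat.add_div_right k hm, pow_succ]; ring

theorem tendsto_zero_of_norm_add_le_mul (hm : 0 < m) (hq₀ : 0 ≤ q) (hq₁ : q < 1)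
    (h : ∀ᶠ k in atTop, ‖u (k + m)‖ ≤ q * ‖u k‖) : Tendsto u atTop (nhds 0) := by
  obtain ⟨K, hK⟩ := eventually_atTop.1 h
  rw [← tendsto_add_atTop_iff_nat K]
  have hbound := norm_le_mul_pow_div_of_norm_add_le (u := fun k => u (k + K)) hm hq₀
    (fun k => by simpa only [add_right_comm] using hK (k + K) (by omega))
  refine squeeze_zero_norm hbound ?_
  simpa using ((tendsto_pow_atTop_nhds_zero_of_lt_one hq₀ hq₁).comp
    (Nat.tendsto_div_const_atTop hm.ne')).const_mul _

end Contraction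

section Recurrence

variable {𝕜 : Type*} [NormedField 𝕜] {m : ℕ} {α A B : 𝕜}

theorem tendsto_zero_of_add_eq_mul_div {u D : ℕ → 𝕜} {L : 𝕜} (hm : 0 < m) (hαL : ‖α‖ < ‖L‖)
    (hD : Tendsto D atTop (nhds L)) (hrec : ∀ k, u (k + m) = α * u k / D k) :
    Tendsto u atTop (nhds 0) := by
  have hL : 0 < ‖L‖ := (norm_nonneg α).trans_lt hαL
  obtain ⟨q, hq, hq₁⟩ := exists_between ((div_lt_one hL).2 hαL)
  have hratio : Tendsto (fun k => ‖α‖ / ‖D k‖) atTop (nhds (‖α‖ / ‖L‖)) :=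
    tendsto_const_nhds.div hD.norm hL.ne'
  have hq₀ : 0 ≤ q := (div_nonneg (norm_nonneg α) hL.le).trans hq.le
  refine tendsto_zero_of_norm_add_le_mul hm hq₀ hq₁ ?_
  filter_upwards [hratio.eventually (eventually_lt_nhds hq)] with k hk
  rw [hrec, norm_div, norm_mul, mul_div_right_comm]
  exact mul_le_mul_of_nonneg_right hk.le (norm_nonneg _)

theorem inv_mul_div_add_mul_sub_div {y : 𝕜} (hα : α ≠ 0) (hαA : α ≠ A) (hy : y ≠ 0) :
    (α * y / (A + B * y))⁻¹ - B / (α - A) = A / α * (y⁻¹ - B / (α - A)) := by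
  have : α - A ≠ 0 := sub_ne_zero.2 hαA
  field_simp
  ring

theorem tendsto_zero_of_add_eq_mul_div_add_mul {p : ℕ → 𝕜} (hm : 0 < m) (hα : α ≠ 0)
    (hαA : ‖α‖ < ‖A‖) (hD : ∀ k, A + B * p k ≠ 0)
    (hrec : ∀ k, p (k + m) = α * p k / (A + B * p k))
    (hp : ∀ j < m, p j ≠ 0) (hfix : ∀ j < m, A - α + B * p j ≠ 0) :
    Tendsto p atTop (nhds 0) := by
  have hA : A ≠ 0 := norm_pos_iff.1 ((norm_nonneg α).trans_lt hαA)
  have hαA' : α ≠ A := by rintro rfl; exact lt_irrefl _ hαA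
  have hp' : ∀ k, p k ≠ 0 := forall_of_forall_lt_of_add hm hp fun k hk => by
    rw [hrec]; exact div_ne_zero (mul_ne_zero hα hk) (hD k)
  set c := B / (α - A)
  set e : ℕ → 𝕜 := fun k => (p k)⁻¹ - c
  have he_rec : ∀ k, e (k + m) = A / α * e k := fun k => by
    simp only [e, hrec]; exact inv_mul_div_add_mul_sub_div hα hαA' (hp' k)
  have he : ∀ k, e k ≠ 0 := forall_of_forall_lt_of_add hm
    (fun j hj h => hfix j hj (by
      have : α - A ≠ 0 := sub_ne_zero.2 hαA'
      have := hp j hj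
      simp only [e, c, sub_eq_zero] at h
      field_simp at h
      linear_combination -h))
    fun k hk => by rw [he_rec]; exact mul_ne_zero (div_ne_zero hA hα) hk
  have hw : Tendsto (fun k => (e k)⁻¹) atTop (nhds 0) :=
    tendsto_zero_of_add_eq_mul_div hm hαA tendsto_const_nhds fun k => by
      rw [he_rec, mul_inv, inv_div, div_mul_eq_mul_div]
  have hpw : p = fun k => (e k)⁻¹ / (1 + c * (e k)⁻¹) := by
    funext k
    have hek := he k
    calc p k = (e k + c)⁻¹ := by simp [e]
      _ = (e k)⁻¹ / (1 + c * (e k)⁻¹) := by field_simp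
  have hden : Tendsto (fun k => 1 + c * (e k)⁻¹) atTop (nhds 1) := by
    simpa using tendsto_const_nhds.add (hw.const_mul c)
  rw [hpw]
  exact zero_div (1 : 𝕜) ▸ hw.div hden one_ne_zero

end Recurrence

theorem stmt_7_general (α A B a b c d : ℝ) (hα : α ≠ 0)
    (hratio : |A / α| > 1) (hbd : A - α + B * b * d ≠ 0) (hac : A - α + B * a * c ≠ 0)
    (ha : a ≠ 0) (hb : b ≠ 0) (hc : c ≠ 0) (hd : d ≠ 0)
    (x : ℤ → ℝ)
    (hx3 : x (-3) = d) (hx2 : x (-2) = c) (hx1 : x (-1) = b) (hx0 : x 0 = a)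
    (hwd : ∀ n : ℤ, 0 ≤ n → A + B * x (n - 1) * x (n - 3) ≠ 0)
    (hrec : ∀ n : ℤ, 0 ≤ n →
      x (n + 1) = α * x (n - 3) / (A + B * x (n - 1) * x (n - 3))) :
    Tendsto x atTop (nhds 0) := by
  have hαA : ‖α‖ < ‖A‖ := by
    rwa [gt_iff_lt, abs_div, one_lt_div (abs_pos.2 hα)] at hratio
  set u : ℕ → ℝ := fun k => x (k - 3)
  have hu_shift : ∀ k : ℕ, x (k - 1) = u (k + 2) ∧ x (k + 1) = u (k + 4) := fun k => by
    constructor <;> congr 1 <;> push_cast <;> ring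
  have hD : ∀ k, A + B * (u (k + 2) * u k) ≠ 0 := fun k => by
    simpa [← mul_assoc, hu_shift] using hwd k k.cast_nonneg
  have hu_rec : ∀ k, u (k + 4) = α * u k / (A + B * (u (k + 2) * u k)) := fun k => by
    simpa [← mul_assoc, hu_shift] using hrec k k.cast_nonneg
  have hu_ne : ∀ k, u k ≠ 0 := forall_of_forall_lt_of_add four_pos
    (fun j hj => by interval_cases j <;> simp [u, hx3, hx2, hx1, hx0, ha, hb, hc, hd])
    fun k hk => by rw [hu_rec]; exact div_ne_zero (mul_ne_zero hα hk) (hD k)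
  have hp : Tendsto (fun k => u (k + 2) * u k) atTop (nhds 0) :=
    tendsto_zero_of_add_eq_mul_div_add_mul two_pos hα hαA hD
      (fun k => by rw [hu_rec]; ring) (fun j _ => mul_ne_zero (hu_ne _) (hu_ne _))
      (fun j hj => by interval_cases j <;> simp [u, hx3, hx2, hx1, hx0, hbd, hac, ← mul_assoc])
  have hu : Tendsto u atTop (nhds 0) :=
    tendsto_zero_of_add_eq_mul_div four_pos hαA
      (by simpa using tendsto_const_nhds.add (hp.const_mul B)) hu_rec
  rw [← Nat.map_cast_int_atTop, tendsto_map'_iff]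
  refine ((tendsto_add_atTop_iff_nat 3).2 hu).congr fun k => ?_
  simp [u]

/-- If `|A/α| > 1`, `A - α + B b d ≠ 0` and `A - α + B a c ≠ 0`, every well-defined
solution converges to zero. -/
theorem stmt_7 (α A B a b c d : ℝ) (hα : α ≠ 0) (hB : B ≠ 0)
    (hratio : |A / α| > 1) (hbd : A - α + B * b * d ≠ 0) (hac : A - α + B * a * c ≠ 0)
    (ha : a ≠ 0) (hb : b ≠ 0) (hc : c ≠ 0) (hd : d ≠ 0)
    (x : ℤ → ℝ)
    (hx3 : x (-3) = d) (hx2 : x (-2) = c) (hx1 : x (-1) = b) (hx0 : x 0 = a)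
    (hwd : ∀ n : ℤ, 0 ≤ n → A + B * x (n - 1) * x (n - 3) ≠ 0)
    (hrec : ∀ n : ℤ, 0 ≤ n →
      x (n + 1) = α * x (n - 3) / (A + B * x (n - 1) * x (n - 3))) :
    Tendsto x atTop (nhds 0) :=
  stmt_7_general α A B a b c d hα hratio hbd hac ha hb hc hd x hx3 hx2 hx1 hx0 hwd hrec
end

section
/- Let (x_n)_{n≥-3} be a well-defined solution of the difference equation. If A − α + B·b·d = 0, then the subsequences (x_{4n-3})_n and (x_{4n-1})_n are constant: x_{4n-3} = d and x_{4n-1} = b for all n ≥ 0. Likewise, if A − α + B·a·c = 0, then x_{4n-2} = c and x_{4n} = a for all n ≥ 0. -/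
/-!
If `A + B p q = α`, then `x_{n+1} = α p / (A + B q p) = p` whenever `(x_{n-3}, x_{n-1}) = (p, q)`;
two such steps carry the pair `(p, q)` from `(x_{n-3}, x_{n-1})` to `(x_{n+1}, x_{n+3})`,
so the pair repeats with period four. Start it at `n = 0` with `(d, b)` and at `n = 1` with `(c, a)`.
-/

section

variable {α A B : ℝ} {x : ℤ → ℝ}

lemma rec_eq_of_denom_eq (hα : α ≠ 0)
    (hrec : ∀ n : ℤ, 0 ≤ n → x (n + 1) = α * x (n - 3) / (A + B * x (n - 1) * x (n - 3)))
    {n : ℤ} (hn : 0 ≤ n) (hden : A + B * x (n - 1) * x (n - 3) = α) :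
    x (n + 1) = x (n - 3) := by
  rw [hrec n hn, hden, mul_div_cancel_left₀ _ hα]

lemma rec_periodic_pair (hα : α ≠ 0)
    (hrec : ∀ n : ℤ, 0 ≤ n → x (n + 1) = α * x (n - 3) / (A + B * x (n - 1) * x (n - 3)))
    {m : ℤ} (hm : 0 ≤ m) {p q : ℝ} (hpq : A + B * p * q = α)
    (hp : x (m - 3) = p) (hq : x (m - 1) = q) (k : ℕ) :
    x (m + 4 * k - 3) = p ∧ x (m + 4 * k - 1) = q := by
  induction k with
  | zero => simpa using ⟨hp, hq⟩
  | succ k ih =>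
    obtain ⟨hpk, hqk⟩ := ih
    have hn : 0 ≤ m + 4 * k := by positivity
    have hp_next : x (m + 4 * k + 1) = p := by
      rw [rec_eq_of_denom_eq hα hrec hn (by rw [hpk, hqk, ← hpq]; ring)]
      rwa [show m + 4 * k - 3 = m + 4 * (k : ℤ) - 3 by ring]
    have hq_next : x (m + 4 * k + 2 + 1) = q := by
      rw [rec_eq_of_denom_eq hα hrec (by positivity)
        (by rw [show m + 4 * k + 2 - 1 = m + 4 * (k : ℤ) + 1 by ring,
          show m + 4 * k + 2 - 3 = m + 4 * (k : ℤ) - 1 by ring, hp_next, hqk, hpq])]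
      rwa [show m + 4 * k + 2 - 3 = m + 4 * (k : ℤ) - 1 by ring]
    push_cast
    exact ⟨by convert hp_next using 2; ring, by convert hq_next using 2; ring⟩

end

theorem stmt_8_general (α A B a b c d : ℝ) (hα : α ≠ 0)
    (x : ℤ → ℝ)
    (hx3 : x (-3) = d) (hx2 : x (-2) = c) (hx1 : x (-1) = b) (hx0 : x 0 = a)
    (hrec : ∀ n : ℤ, 0 ≤ n →
      x (n + 1) = α * x (n - 3) / (A + B * x (n - 1) * x (n - 3))) :
    (A - α + B * b * d = 0 →
      ∀ n : ℕ, x (4 * (n : ℤ) - 3) = d ∧ x (4 * (n : ℤ) - 1) = b) ∧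
    (A - α + B * a * c = 0 →
      ∀ n : ℕ, x (4 * (n : ℤ) - 2) = c ∧ x (4 * (n : ℤ)) = a) := by
  refine ⟨fun h n => ?_, fun h n => ?_⟩
  · simpa using rec_periodic_pair hα hrec le_rfl (p := d) (q := b) (by linarith)
      (by simpa using hx3) (by simpa using hx1) n
  · have h' := rec_periodic_pair hα hrec zero_le_one (p := c) (q := a) (by linarith)
      (by simpa using hx2) (by simpa using hx0) n
    exact ⟨by convert h'.1 using 2; ring, by convert h'.2 using 2; ring⟩

/-- If `A - α + B b d = 0` the subsequences `(x_{4n-3})` and `(x_{4n-1})` are constant,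
and if `A - α + B a c = 0` the subsequences `(x_{4n-2})` and `(x_{4n})` are constant. -/
theorem stmt_8 (α A B a b c d : ℝ) (hα : α ≠ 0) (hB : B ≠ 0)
    (ha : a ≠ 0) (hb : b ≠ 0) (hc : c ≠ 0) (hd : d ≠ 0)
    (x : ℤ → ℝ)
    (hx3 : x (-3) = d) (hx2 : x (-2) = c) (hx1 : x (-1) = b) (hx0 : x 0 = a)
    (hwd : ∀ n : ℤ, 0 ≤ n → A + B * x (n - 1) * x (n - 3) ≠ 0)
    (hrec : ∀ n : ℤ, 0 ≤ n →
      x (n + 1) = α * x (n - 3) / (A + B * x (n - 1) * x (n - 3))) :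
    (A - α + B * b * d = 0 →
      ∀ n : ℕ, x (4 * (n : ℤ) - 3) = d ∧ x (4 * (n : ℤ) - 1) = b) ∧
    (A - α + B * a * c = 0 →
      ∀ n : ℕ, x (4 * (n : ℤ) - 2) = c ∧ x (4 * (n : ℤ)) = a) :=
  stmt_8_general α A B a b c d hα x hx3 hx2 hx1 hx0 hrec
end

section
/- Assume |A/α| > 1, A − α + B·b·d = 0 and A − α + B·a·c = 0, and let (x_n)_{n≥-3} be the solution of the difference equation (which is then well defined). Then for a real number l, the solution converges to l (x_n → l as n → ∞) if and only if a = b = c = d = l. -/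
open Filter

/-! The two quantities `A + B x_{n-1} x_{n-3}` and `A + B x_n x_{n-2}` both equal `α` at `n = 0`,
and this pair of identities propagates: if the first equals `α`, the recurrence gives
`x_{n+1} = x_{n-3}`, which turns the second into the first one at `n + 1`. Hence every denominator
is `α ≠ 0` and the solution is 4-periodic, and a periodic sequence converges only if it is
constant. -/

section EventuallyPeriodic

variable {X : Type*} {x : ℤ → X} {N p : ℤ}

theorem eq_add_mul_of_periodic_from (hp : 0 ≤ p) (h : ∀ n ≥ N, x (n + p) = x n)
    {n : ℤ} (hn : N ≤ n) (k : ℕ) : x (n + k * p) = x n := by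
  induction k with
  | zero => simp
  | succ k ih =>
    rw [Nat.cast_succ, add_one_mul, ← add_assoc, h _ (by nlinarith), ih]

theorem eq_add_emod_of_periodic_from (hp : 0 < p) (h : ∀ n ≥ N, x (n + p) = x n)
    {n : ℤ} (hn : N ≤ n) : x n = x (N + (n - N) % p) := by
  have hq : (0 : ℤ) ≤ (n - N) / p := Int.ediv_nonneg (by omega) hp.le
  have := eq_add_mul_of_periodic_from hp.le h (n := N + (n - N) % p)
    (by linarith [Int.emod_nonneg (n - N) hp.ne']) ((n - N) / p).toNat
  rw [← this, Int.toNat_of_nonneg hq]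
  congr 1
  linarith [Int.emod_add_mul_ediv (n - N) p]

theorem tendsto_nhds_iff_of_periodic_from [TopologicalSpace X] [T2Space X] {l : X}
    (hp : 0 < p) (h : ∀ n ≥ N, x (n + p) = x n) :
    Tendsto x atTop (nhds l) ↔ ∀ i, N ≤ i → i < N + p → x i = l := by
  refine ⟨fun hx i hi _ => ?_, fun hl => ?_⟩
  · have hsub : Tendsto (fun k : ℕ => i + k * p) atTop atTop :=
      tendsto_atTop_add_const_left _ i (tendsto_natCast_atTop_atTop.atTop_mul_const' hp)
    refine tendsto_nhds_unique ?_ (hx.comp hsub)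
    simp only [Function.comp_def, eq_add_mul_of_periodic_from hp.le h hi]
    exact tendsto_const_nhds
  · refine tendsto_const_nhds.congr' (eventually_atTop.2 ⟨N, fun n hn => ?_⟩)
    rw [eq_add_emod_of_periodic_from hp h hn]
    exact (hl _ (by linarith [Int.emod_nonneg (n - N) hp.ne'])
      (by linarith [Int.emod_lt_of_pos (n - N) hp])).symm

end EventuallyPeriodic

theorem denominators_eq_of_rec {α A B : ℝ} {x : ℤ → ℝ}
    (h₀ : A + B * x (-1) * x (-3) = α) (h₁ : A + B * x 0 * x (-2) = α) (hα : α ≠ 0)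
    (hrec : ∀ n : ℤ, 0 ≤ n →
      x (n + 1) = α * x (n - 3) / (A + B * x (n - 1) * x (n - 3))) :
    ∀ n : ℤ, 0 ≤ n →
      A + B * x (n - 1) * x (n - 3) = α ∧ A + B * x n * x (n - 2) = α := by
  intro n hn
  induction n, hn using Int.leInduction with
  | base => exact ⟨h₀, h₁⟩
  | succ n hn ih =>
    obtain ⟨hodd, heven⟩ := ih
    have hstep : x (n + 1) = x (n - 3) := by rw [hrec n hn, hodd, mul_div_cancel_left₀ _ hα]
    constructor
    · rwa [add_sub_cancel_right, show n + 1 - 3 = n - 2 by ring]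
    · rw [hstep, show n + 1 - 2 = n - 1 by ring, ← hodd]
      ring

theorem stmt_9_general (α A B a b c d : ℝ) (hα : α ≠ 0)
    (hbd : A - α + B * b * d = 0) (hac : A - α + B * a * c = 0)
    (x : ℤ → ℝ)
    (hx3 : x (-3) = d) (hx2 : x (-2) = c) (hx1 : x (-1) = b) (hx0 : x 0 = a)
    (hrec : ∀ n : ℤ, 0 ≤ n →
      x (n + 1) = α * x (n - 3) / (A + B * x (n - 1) * x (n - 3))) :
    (∀ n : ℤ, 0 ≤ n → A + B * x (n - 1) * x (n - 3) ≠ 0) ∧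
    ∀ l : ℝ, Tendsto x atTop (nhds l) ↔ (a = l ∧ b = l ∧ c = l ∧ d = l) := by
  have hden := denominators_eq_of_rec (by rw [hx1, hx3]; linarith) (by rw [hx0, hx2]; linarith)
    hα hrec
  have hper : ∀ n ≥ -3, x (n + 4) = x n := fun n hn => by
    rw [show n + 4 = n + 3 + 1 by ring, hrec _ (by omega), (hden _ (by omega)).1,
      mul_div_cancel_left₀ _ hα, add_sub_cancel_right]
  refine ⟨fun n hn => (hden n hn).1 ▸ hα, fun l => ?_⟩
  rw [tendsto_nhds_iff_of_periodic_from (by norm_num) hper]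
  constructor
  · intro h
    exact ⟨hx0 ▸ h 0 (by norm_num) (by norm_num), hx1 ▸ h (-1) (by norm_num) (by norm_num),
      hx2 ▸ h (-2) (by norm_num) (by norm_num), hx3 ▸ h (-3) le_rfl (by norm_num)⟩
  · rintro ⟨rfl, rfl, rfl, rfl⟩ i hi₁ hi₂
    interval_cases i <;> assumption

/-- If `|A/α| > 1`, `A - α + B b d = 0` and `A - α + B a c = 0`, the solution is
well defined, and it converges to a real number `l` iff `a = b = c = d = l`. -/
theorem stmt_9 (α A B a b c d : ℝ) (hα : α ≠ 0) (hB : B ≠ 0)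
    (hratio : |A / α| > 1) (hbd : A - α + B * b * d = 0) (hac : A - α + B * a * c = 0)
    (ha : a ≠ 0) (hb : b ≠ 0) (hc : c ≠ 0) (hd : d ≠ 0)
    (x : ℤ → ℝ)
    (hx3 : x (-3) = d) (hx2 : x (-2) = c) (hx1 : x (-1) = b) (hx0 : x 0 = a)
    (hrec : ∀ n : ℤ, 0 ≤ n →
      x (n + 1) = α * x (n - 3) / (A + B * x (n - 1) * x (n - 3))) :
    (∀ n : ℤ, 0 ≤ n → A + B * x (n - 1) * x (n - 3) ≠ 0) ∧
    ∀ l : ℝ, Tendsto x atTop (nhds l) ↔ (a = l ∧ b = l ∧ c = l ∧ d = l) :=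
  stmt_9_general α A B a b c d hα hbd hac x hx3 hx2 hx1 hx0 hrec
end

section
/- Assume A = α, and let (x_n)_{n≥-3} be a well-defined solution of the difference equation. Then the solution converges to zero, i.e. x_n → 0 as n → ∞. -/
/-!
With `t n = x (n - 1) * x (n - 3)` the equation (for `A = α`) gives `t (n + 2) = α t n / (α + B t n)`,
i.e. `1 / t (n + 2) = 1 / t n + B / α`, so `1 / t` is arithmetic along each parity class. Rewriting
the equation as `x (n + 1) = x (n - 3) * (1 / t n) / (1 / t n + B / α)`, every residue class
`a k = x (4 k + j)` satisfies `a (k + 1) * (σ + 2 k + 1) = a k * (σ + 2 k)` after rescaling, so `a k`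
is eventually a product of factors `(σ + 2 i) / (σ + 2 i + 1)` and decays like `k ^ (-1/2)`.
-/

open Filter

theorem tendsto_of_tendsto_comp_mul_add {X : Type*} {a : ℕ → X} {l : Filter X} {m : ℕ}
    (hm : 0 < m) (h : ∀ j < m, Tendsto (fun k => a (m * k + j)) atTop l) :
    Tendsto a atTop l := by
  rw [tendsto_atTop']
  intro s hs
  obtain ⟨K, hK⟩ := eventually_atTop.1 <|
    eventually_all.2 fun j : Fin m => (h j j.2).eventually_mem hs
  refine ⟨m * K, fun n hn => ?_⟩
  have hKn : K ≤ n / m := (Nat.le_div_iff_mul_le hm).2 (by linarith [Nat.mul_comm m K])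
  simpa only [Nat.div_add_mod] using hK (n / m) hKn ⟨n % m, Nat.mod_lt n hm⟩

theorem tendsto_zero_of_succ_mul_eq_of_pos {a : ℕ → ℝ} {σ : ℝ} (hσ : 0 < σ)
    (ha : ∀ k : ℕ, a (k + 1) * (σ + 2 * k + 1) = a k * (σ + 2 * k)) :
    Tendsto a atTop (nhds 0) := by
  -- `a k ^ 2 * (σ + 2 k)` decreases because `v (v + 2) ≤ (v + 1) ^ 2`.
  have hanti : Antitone fun k : ℕ => a k ^ 2 * (σ + 2 * k) := by
    refine antitone_nat_of_succ_le fun k => ?_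
    have hv : 0 < σ + 2 * k := by positivity
    have hsq : a (k + 1) ^ 2 * (σ + 2 * k + 1) ^ 2 = a k ^ 2 * (σ + 2 * k) ^ 2 := by
      rw [← mul_pow, ha, mul_pow]
    push_cast
    nlinarith [sq_nonneg (a k), sq_nonneg (a (k + 1)), mul_nonneg (sq_nonneg (a k)) hv.le]
  have hbound : ∀ k : ℕ, a k ^ 2 ≤ a 0 ^ 2 * σ / (σ + 2 * k) := fun k => by
    rw [le_div_iff₀ (by positivity)]
    simpa using hanti (Nat.zero_le k)
  have hlim : Tendsto (fun k : ℕ => a 0 ^ 2 * σ / (σ + 2 * k)) atTop (nhds 0) :=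
    tendsto_const_nhds.div_atTop <| tendsto_atTop_add_const_left _ _ <|
      tendsto_natCast_atTop_atTop.const_mul_atTop two_pos
  have hsq : Tendsto (fun k => a k ^ 2) atTop (nhds 0) :=
    squeeze_zero (fun k => sq_nonneg _) hbound hlim
  rw [tendsto_zero_iff_abs_tendsto_zero]
  simpa [Function.comp_def, Real.sqrt_sq_eq_abs] using hsq.sqrt

theorem tendsto_zero_of_succ_mul_eq {a : ℕ → ℝ} {s r : ℝ} (hr : r ≠ 0)
    (ha : ∀ k : ℕ, a (k + 1) * (s + (2 * k + 1) * r) = a k * (s + 2 * k * r)) :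
    Tendsto a atTop (nhds 0) := by
  obtain ⟨K, hK⟩ := exists_nat_gt (-(s / r) / 2)
  refine (tendsto_add_atTop_iff_nat K).1 <|
    tendsto_zero_of_succ_mul_eq_of_pos (σ := s / r + 2 * K) (by linarith) fun k => ?_
  have h := ha (k + K)
  push_cast at h ⊢
  rw [show k + 1 + K = k + K + 1 by omega]
  field_simp
  linear_combination h

-- The equation with `A = α`, reindexed by `y k = x (k - 3)`.
structure IsWellDefinedSolution (α B : ℝ) (y : ℕ → ℝ) : Prop where
  den_ne_zero : ∀ k, α + B * y (k + 2) * y k ≠ 0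
  add_four : ∀ k, y (k + 4) = α * y k / (α + B * y (k + 2) * y k)

namespace IsWellDefinedSolution

variable {α B : ℝ} {y : ℕ → ℝ}

theorem ne_zero (h : IsWellDefinedSolution α B y) (hα : α ≠ 0)
    (h0 : y 0 ≠ 0) (h1 : y 1 ≠ 0) (h2 : y 2 ≠ 0) (h3 : y 3 ≠ 0) (k : ℕ) : y k ≠ 0 := by
  induction k using Nat.strong_induction_on with
  | _ k ih =>
    match k with
    | 0 => exact h0
    | 1 => exact h1
    | 2 => exact h2
    | 3 => exact h3
    | k + 4 =>
      rw [h.add_four]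
      exact div_ne_zero (mul_ne_zero hα (ih k (by omega))) (h.den_ne_zero k)

theorem inv_mul_add_four (h : IsWellDefinedSolution α B y) (hα : α ≠ 0) (hy : ∀ k, y k ≠ 0)
    (k : ℕ) : (y (k + 4) * y (k + 2))⁻¹ = (y (k + 2) * y k)⁻¹ + B / α := by
  have := h.den_ne_zero k
  have := hy k
  have := hy (k + 2)
  rw [h.add_four]
  field_simp

theorem inv_mul_four_mul_add (h : IsWellDefinedSolution α B y) (hα : α ≠ 0)
    (hy : ∀ k, y k ≠ 0) (j m : ℕ) :
    (y (4 * m + j + 2) * y (4 * m + j))⁻¹ = (y (j + 2) * y j)⁻¹ + 2 * m * (B / α) := by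
  induction m with
  | zero => simp
  | succ m ih =>
    rw [show 4 * (m + 1) + j = 4 * m + j + 2 + 2 by ring, h.inv_mul_add_four hα hy,
      show 4 * m + j + 2 + 2 = 4 * m + j + 4 by ring, h.inv_mul_add_four hα hy, ih]
    push_cast
    ring

theorem add_four_mul_inv_add (h : IsWellDefinedSolution α B y) (hα : α ≠ 0)
    (hy : ∀ k, y k ≠ 0) (k : ℕ) :
    y (k + 4) * ((y (k + 2) * y k)⁻¹ + B / α) = y k * (y (k + 2) * y k)⁻¹ := by
  have := hy k
  have := hy (k + 2)
  rw [h.add_four, div_mul_eq_mul_div, div_eq_iff (h.den_ne_zero k)]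
  field_simp

theorem tendsto_zero (h : IsWellDefinedSolution α B y) (hα : α ≠ 0) (hB : B ≠ 0)
    (hy : ∀ k, y k ≠ 0) : Tendsto y atTop (nhds 0) := by
  refine tendsto_of_tendsto_comp_mul_add four_pos fun j _ => ?_
  refine tendsto_zero_of_succ_mul_eq (s := (y (j + 2) * y j)⁻¹) (div_ne_zero hB hα) fun m => ?_
  have hm := h.add_four_mul_inv_add hα hy (4 * m + j)
  rw [h.inv_mul_four_mul_add hα hy] at hm
  rw [show 4 * (m + 1) + j = 4 * m + j + 4 by ring]
  linear_combination hm

end IsWellDefinedSolution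

/-- If `A = α`, every well-defined solution converges to zero. -/
theorem stmt_10 (α A B a b c d : ℝ) (hα : α ≠ 0) (hB : B ≠ 0) (hAα : A = α)
    (ha : a ≠ 0) (hb : b ≠ 0) (hc : c ≠ 0) (hd : d ≠ 0)
    (x : ℤ → ℝ)
    (hx3 : x (-3) = d) (hx2 : x (-2) = c) (hx1 : x (-1) = b) (hx0 : x 0 = a)
    (hwd : ∀ n : ℤ, 0 ≤ n → A + B * x (n - 1) * x (n - 3) ≠ 0)
    (hrec : ∀ n : ℤ, 0 ≤ n →
      x (n + 1) = α * x (n - 3) / (A + B * x (n - 1) * x (n - 3))) :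
    Tendsto x atTop (nhds 0) := by
  subst hAα
  set y : ℕ → ℝ := fun k => x (k - 3) with hy
  have hsol : IsWellDefinedSolution A B y := by
    refine ⟨fun k => ?_, fun k => ?_⟩
    · simpa [hy, show (k : ℤ) + 2 - 3 = k - 1 by ring] using hwd k k.cast_nonneg
    · simpa [hy, show (k : ℤ) + 4 - 3 = k + 1 by ring, show (k : ℤ) + 2 - 3 = k - 1 by ring]
        using hrec k k.cast_nonneg
  have hne := hsol.ne_zero hα (by simpa [hy, hx3]) (by simpa [hy, hx2]) (by simpa [hy, hx1])
    (by simpa [hy, hx0])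
  have hshift : Tendsto (fun n : ℤ => (n + 3).toNat) atTop atTop :=
    tendsto_atTop_atTop.2 fun k => ⟨k, fun n hn => by omega⟩
  refine ((hsol.tendsto_zero hα hB hne).comp hshift).congr' ?_
  filter_upwards [eventually_ge_atTop (-3)] with n hn
  simp only [Function.comp_apply, hy]
  congr
  omega
end

section
/- Assume A = −α, and let (x_n)_{n≥-3} be a well-defined solution of the difference equation (in particular A + B·b·d ≠ 0 and A + B·a·c ≠ 0). Then for all integers n ≥ 0: x_{4n-3} = d·( −A/(A + B·b·d) )^n, x_{4n-1} = b·( −(A + B·b·d)/A )^n, x_{4n-2} = c·( −A/(A + B·a·c) )^n, and x_{4n} = a·( −(A + B·a·c)/A )^n. -/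
/-!
Since `α = -A`, the equation splits into two independent second-order recurrences
`y (m + 2) = -A * y m / (A + B * y (m + 1) * y m)`, one on the odd and one on the even indices.
For such a `y`, the product `P m = y (m + 1) * y m` is 2-periodic: the map `P ↦ -A P / (A + B P)`
is an involution, because `A + B * (-A P / (A + B P)) = A ^ 2 / (A + B P)`. Hence the two
subsequences of `y` are geometric, with mutually inverse ratios `-A / (A + B p)` and `-(A + B p) / A`.
-/

section TwoPeriodic

variable {A B p : ℝ}

lemma neg_div_mul_neg_div_eq_one (hA : A ≠ 0) (hp : A + B * p ≠ 0) :
    -A / (A + B * p) * (-(A + B * p) / A) = 1 := by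
  field_simp

lemma neg_div_add_mul_mul_neg_div (hA : A ≠ 0) (hp : A + B * p ≠ 0) :
    -A / (A + B * (p * (-A / (A + B * p)))) = -(A + B * p) / A := by
  have hden : A + B * (p * (-A / (A + B * p))) = A ^ 2 / (A + B * p) := by
    field_simp
    ring
  rw [hden, div_div_eq_mul_div]
  field_simp

theorem geometric_of_rec {y : ℕ → ℝ} (hA : A ≠ 0) (hp : A + B * y 1 * y 0 ≠ 0)
    (hy : ∀ m, y (m + 2) = -A * y m / (A + B * y (m + 1) * y m)) (n : ℕ) :
    y (2 * n) = y 0 * (-A / (A + B * y 1 * y 0)) ^ n ∧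
      y (2 * n + 1) = y 1 * (-(A + B * y 1 * y 0) / A) ^ n := by
  simp only [mul_assoc B] at hp ⊢
  set p := y 1 * y 0
  set r := -A / (A + B * p)
  set s := -(A + B * p) / A
  have hrs : ∀ k : ℕ, r ^ k * s ^ k = 1 := fun k => by
    rw [← mul_pow, neg_div_mul_neg_div_eq_one hA hp, one_pow]
  induction n with
  | zero => simp
  | succ n ih =>
    obtain ⟨h_even, h_odd⟩ := ih
    have h_even' : y (2 * (n + 1)) = y 0 * r ^ (n + 1) := by
      have hprod : y (2 * n + 1) * y (2 * n) = p := by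
        rw [h_even, h_odd]
        linear_combination p * hrs n
      rw [show 2 * (n + 1) = 2 * n + 2 by ring, hy, mul_assoc B, hprod, h_even, pow_succ]
      ring
    refine ⟨h_even', ?_⟩
    have hprod : y (2 * (n + 1)) * y (2 * n + 1) = p * r := by
      rw [h_even', h_odd]
      linear_combination p * r * hrs n
    rw [show 2 * (n + 1) + 1 = 2 * n + 1 + 2 by ring, hy, show 2 * n + 1 + 1 = 2 * (n + 1) by ring,
      mul_assoc B, hprod, mul_div_right_comm, neg_div_add_mul_mul_neg_div hA hp, h_odd, pow_succ]
    ring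

end TwoPeriodic

lemma rec_two_mul_add {α A B : ℝ} {x : ℤ → ℝ}
    (hrec : ∀ n : ℤ, 0 ≤ n → x (n + 1) = α * x (n - 3) / (A + B * x (n - 1) * x (n - 3)))
    (k m : ℕ) :
    x (2 * (m + 2 : ℕ) + k - 3) =
      α * x (2 * m + k - 3) / (A + B * x (2 * (m + 1 : ℕ) + k - 3) * x (2 * m + k - 3)) := by
  push_cast
  rw [show (2 : ℤ) * (m + 2) + k - 3 = 2 * m + k + 1 by ring,
    show (2 : ℤ) * (m + 1) + k - 3 = 2 * m + k - 1 by ring, hrec _ (by positivity)]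

theorem stmt_11_general (α A B a b c d : ℝ) (hα : α ≠ 0) (hAα : A = -α)
    (x : ℤ → ℝ)
    (hx3 : x (-3) = d) (hx2 : x (-2) = c) (hx1 : x (-1) = b) (hx0 : x 0 = a)
    (hwd : ∀ n : ℤ, 0 ≤ n → A + B * x (n - 1) * x (n - 3) ≠ 0)
    (hrec : ∀ n : ℤ, 0 ≤ n →
      x (n + 1) = α * x (n - 3) / (A + B * x (n - 1) * x (n - 3))) :
    ∀ n : ℕ,
      x (4 * (n : ℤ) - 3) = d * (-A / (A + B * b * d)) ^ n ∧
      x (4 * (n : ℤ) - 1) = b * (-(A + B * b * d) / A) ^ n ∧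
      x (4 * (n : ℤ) - 2) = c * (-A / (A + B * a * c)) ^ n ∧
      x (4 * (n : ℤ)) = a * (-(A + B * a * c) / A) ^ n := by
  have hA : A ≠ 0 := by rwa [hAα, neg_ne_zero]
  rw [show α = -A by rw [hAα, neg_neg]] at hrec
  have hodd := geometric_of_rec (y := fun m : ℕ => x (2 * m + (0 : ℕ) - 3)) hA
    (by simpa [hx1, hx3] using hwd 0 le_rfl) (rec_two_mul_add hrec 0)
  have heven := geometric_of_rec (y := fun m : ℕ => x (2 * m + (1 : ℕ) - 3)) hA
    (by simpa [hx0, hx2] using hwd 1 zero_le_one) (rec_two_mul_add hrec 1)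
  intro n
  obtain ⟨h_odd₁, h_odd₃⟩ := hodd n
  obtain ⟨h_even₂, h_even₄⟩ := heven n
  norm_num only [hx0, hx1, hx2, hx3] at h_odd₁ h_odd₃ h_even₂ h_even₄
  refine ⟨?_, ?_, ?_, ?_⟩
  · convert h_odd₁ using 2; push_cast; ring
  · convert h_odd₃ using 2; push_cast; ring
  · convert h_even₂ using 2; push_cast; ring
  · convert h_even₄ using 2; push_cast; ring

/-- Case `A = -α`: explicit geometric formulas for the four subsequences. -/
theorem stmt_11 (α A B a b c d : ℝ) (hα : α ≠ 0) (hB : B ≠ 0) (hAα : A = -α)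
    (ha : a ≠ 0) (hb : b ≠ 0) (hc : c ≠ 0) (hd : d ≠ 0)
    (x : ℤ → ℝ)
    (hx3 : x (-3) = d) (hx2 : x (-2) = c) (hx1 : x (-1) = b) (hx0 : x 0 = a)
    (hwd : ∀ n : ℤ, 0 ≤ n → A + B * x (n - 1) * x (n - 3) ≠ 0)
    (hrec : ∀ n : ℤ, 0 ≤ n →
      x (n + 1) = α * x (n - 3) / (A + B * x (n - 1) * x (n - 3))) :
    ∀ n : ℕ,
      x (4 * (n : ℤ) - 3) = d * (-A / (A + B * b * d)) ^ n ∧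
      x (4 * (n : ℤ) - 1) = b * (-(A + B * b * d) / A) ^ n ∧
      x (4 * (n : ℤ) - 2) = c * (-A / (A + B * a * c)) ^ n ∧
      x (4 * (n : ℤ)) = a * (-(A + B * a * c) / A) ^ n :=
  stmt_11_general α A B a b c d hα hAα x hx3 hx2 hx1 hx0 hwd hrec
end

section
/- Assume A = −α and |A + B·b·d| ≠ |A|, and let (x_n)_{n≥-3} be a well-defined solution of the difference equation. Then the solution is unbounded: for every M > 0 there exists n with |x_n| > M. More precisely, if |A + B·b·d| < |A| then |x_{4n-3}| → ∞, and if |A + B·b·d| > |A| then |x_{4n-1}| → ∞, as n → ∞. -/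
open Filter Finset

/-!
Write `t n = A + B x_{n-1} x_{n-3}` for the denominator of the recurrence. When `A = -α`,
substituting `x_{n+1} = α x_{n-3} / t n` into `t (n + 2)` gives `t (n + 2) = α² / t n`, so `t` is
4-periodic. Hence `x_{4k+1} = (α / t 0) x_{4k-3}` and `x_{4k+3} = (t 0 / α) x_{4k-1}`: along these two
subsequences the solution is geometric with ratios `α / t 0` and `t 0 / α`, and `|α| = |A|`
decides which of the two ratios exceeds `1` in absolute value.
-/

def recDenom (A B : ℝ) (x : ℤ → ℝ) (n : ℤ) : ℝ := A + B * x (n - 1) * x (n - 3)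

theorem recDenom_add_two {α B : ℝ} {x : ℤ → ℝ} {n : ℤ} (ht : recDenom (-α) B x n ≠ 0)
    (hx : x (n + 1) = α * x (n - 3) / recDenom (-α) B x n) :
    recDenom (-α) B x (n + 2) = α ^ 2 / recDenom (-α) B x n := by
  have hxB : B * x (n - 1) * x (n - 3) = recDenom (-α) B x n + α := by
    unfold recDenom; ring
  calc recDenom (-α) B x (n + 2) = -α + B * x (n + 1) * x (n - 1) := by
        unfold recDenom; ring_nf
    _ = -α + α * (B * x (n - 1) * x (n - 3)) / recDenom (-α) B x n := by rw [hx]; ring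
    _ = α ^ 2 / recDenom (-α) B x n := by rw [hxB]; field_simp; ring

section Solution

variable {α B : ℝ} {x : ℤ → ℝ}
  (hwd : ∀ n : ℤ, 0 ≤ n → recDenom (-α) B x n ≠ 0)
  (hrec : ∀ n : ℤ, 0 ≤ n → x (n + 1) = α * x (n - 3) / recDenom (-α) B x n)
include hwd hrec

theorem recDenom_four_mul_add_two (k : ℕ) :
    recDenom (-α) B x (4 * k + 2) = α ^ 2 / recDenom (-α) B x (4 * k) :=
  recDenom_add_two (hwd _ (by positivity)) (hrec _ (by positivity))

theorem recDenom_four_mul (k : ℕ) : recDenom (-α) B x (4 * k) = recDenom (-α) B x 0 := by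
  induction k with
  | zero => simp
  | succ k ih =>
    have h₂ := hwd (4 * k + 2) (by positivity)
    rw [show (4 * ((k + 1 : ℕ) : ℤ)) = 4 * k + 2 + 2 by push_cast; ring,
      recDenom_add_two h₂ (hrec _ (by positivity))]
    rw [recDenom_four_mul_add_two hwd hrec] at h₂ ⊢
    rw [div_div_cancel₀ (left_ne_zero_of_mul h₂), ih]

theorem solution_four_mul_sub_three (k : ℕ) :
    x (4 * k - 3) = (α / recDenom (-α) B x 0) ^ k * x (-3) := by
  induction k with
  | zero => simp
  | succ k ih =>
    rw [show (4 * ((k + 1 : ℕ) : ℤ)) - 3 = 4 * k + 1 by push_cast; ring,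
      hrec _ (by positivity), recDenom_four_mul hwd hrec, ih, pow_succ]
    ring

theorem solution_four_mul_sub_one (hα : α ≠ 0) (k : ℕ) :
    x (4 * k - 1) = (recDenom (-α) B x 0 / α) ^ k * x (-1) := by
  induction k with
  | zero => simp
  | succ k ih =>
    rw [show (4 * ((k + 1 : ℕ) : ℤ)) - 1 = 4 * k + 2 + 1 by push_cast; ring,
      hrec _ (by positivity), recDenom_four_mul_add_two hwd hrec, recDenom_four_mul hwd hrec,
      show (4 * (k : ℤ) + 2 - 3) = 4 * k - 1 by ring, ih, pow_succ _ k]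
    field_simp

end Solution

theorem tendsto_abs_pow_mul_atTop {r c : ℝ} (hr : 1 < |r|) (hc : c ≠ 0) :
    Tendsto (fun n : ℕ => |r ^ n * c|) atTop atTop := by
  simpa only [abs_mul, abs_pow] using
    (tendsto_pow_atTop_atTop_of_one_lt hr).atTop_mul_const (abs_pos.2 hc)

theorem stmt_12_general (α A B b d : ℝ) (hα : α ≠ 0) (hAα : A = -α)
    (hne : |A + B * b * d| ≠ |A|)
    (hb : b ≠ 0) (hd : d ≠ 0)
    (x : ℤ → ℝ)
    (hx3 : x (-3) = d) (hx1 : x (-1) = b)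
    (hwd : ∀ n : ℤ, 0 ≤ n → A + B * x (n - 1) * x (n - 3) ≠ 0)
    (hrec : ∀ n : ℤ, 0 ≤ n →
      x (n + 1) = α * x (n - 3) / (A + B * x (n - 1) * x (n - 3))) :
    (∀ M : ℝ, M > 0 → ∃ n : ℤ, -3 ≤ n ∧ |x n| > M) ∧
    (|A + B * b * d| < |A| →
      Tendsto (fun n : ℕ => |x (4 * (n : ℤ) - 3)|) atTop atTop) ∧
    (|A + B * b * d| > |A| →
      Tendsto (fun n : ℕ => |x (4 * (n : ℤ) - 1)|) atTop atTop) := by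
  subst hAα
  have ht₀ : recDenom (-α) B x 0 = -α + B * b * d := by simp [recDenom, hx1, hx3]
  have hpos : 0 < |-α + B * b * d| := abs_pos.2 (ht₀ ▸ hwd 0 le_rfl)
  have hsmall (hlt : |-α + B * b * d| < |-α|) :
      Tendsto (fun n : ℕ => |x (4 * (n : ℤ) - 3)|) atTop atTop := by
    simp_rw [solution_four_mul_sub_three hwd hrec, ht₀, hx3]
    refine tendsto_abs_pow_mul_atTop ?_ hd
    rw [abs_div, one_lt_div hpos, ← abs_neg α]
    exact hlt
  have hlarge (hgt : |-α + B * b * d| > |-α|) :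
      Tendsto (fun n : ℕ => |x (4 * (n : ℤ) - 1)|) atTop atTop := by
    simp_rw [solution_four_mul_sub_one hwd hrec hα, ht₀, hx1]
    refine tendsto_abs_pow_mul_atTop ?_ hb
    rw [abs_div, one_lt_div (abs_pos.2 hα), ← abs_neg α]
    exact hgt
  refine ⟨fun M _ => ?_, hsmall, hlarge⟩
  rcases hne.lt_or_gt with hlt | hgt
  · obtain ⟨n, hn⟩ := ((hsmall hlt).eventually_gt_atTop M).exists
    exact ⟨4 * n - 3, by omega, hn⟩
  · obtain ⟨n, hn⟩ := ((hlarge hgt).eventually_gt_atTop M).exists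
    exact ⟨4 * n - 1, by omega, hn⟩

/-- Case `A = -α` with `|A + B b d| ≠ |A|`: every well-defined solution is unbounded;
more precisely `|x_{4n-3}| → ∞` when `|A + B b d| < |A|` and `|x_{4n-1}| → ∞` when
`|A + B b d| > |A|`. -/
theorem stmt_12 (α A B a b c d : ℝ) (hα : α ≠ 0) (hB : B ≠ 0) (hAα : A = -α)
    (hne : |A + B * b * d| ≠ |A|)
    (ha : a ≠ 0) (hb : b ≠ 0) (hc : c ≠ 0) (hd : d ≠ 0)
    (x : ℤ → ℝ)
    (hx3 : x (-3) = d) (hx2 : x (-2) = c) (hx1 : x (-1) = b) (hx0 : x 0 = a)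
    (hwd : ∀ n : ℤ, 0 ≤ n → A + B * x (n - 1) * x (n - 3) ≠ 0)
    (hrec : ∀ n : ℤ, 0 ≤ n →
      x (n + 1) = α * x (n - 3) / (A + B * x (n - 1) * x (n - 3))) :
    (∀ M : ℝ, M > 0 → ∃ n : ℤ, -3 ≤ n ∧ |x n| > M) ∧
    (|A + B * b * d| < |A| →
      Tendsto (fun n : ℕ => |x (4 * (n : ℤ) - 3)|) atTop atTop) ∧
    (|A + B * b * d| > |A| →
      Tendsto (fun n : ℕ => |x (4 * (n : ℤ) - 1)|) atTop atTop) :=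
  stmt_12_general α A B b d hα hAα hne hb hd x hx3 hx1 hwd hrec
end

section
/- Assume A = −α, and let (x_n)_{n≥-3} be a well-defined solution of the difference equation. Then exactly one of the subsequences (x_{4n-3})_n, (x_{4n-1})_n tends in absolute value to ∞ or both converge; specifically, if |A + B·b·d| < |A| then x_{4n-1} → 0 and |x_{4n-3}| → ∞, while if |A + B·b·d| > |A| then x_{4n-3} → 0 and |x_{4n-1}| → ∞, as n → ∞. -/
open Filter

/-!
Only odd indices interact: `x_{n+1} = ρ(x_{n-1} x_{n-3}) · x_{n-3}` with
`ρ(P) = α / (A + B P)` (`stepFactor`), and the new product is `x_{n+1} x_{n-1} = ρ(P) · P`.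
When `A = -α` one has `(A + B P)(A + B ρ(P) P) = A² + (A + α) B P = α²`, so two consecutive
factors multiply to `1`.
Hence `x_{4n-3} = d qⁿ` and `x_{4n-1} = b q⁻ⁿ` with `q = α / (A + B b d)`, and
`|q| = |A| / |A + B b d|` decides which of the two geometric sequences blows up.
-/

noncomputable def stepFactor (α A B P : ℝ) : ℝ := α / (A + B * P)

lemma stepFactor_mul_stepFactor_eq_one {α A B P : ℝ} (hα : α ≠ 0) (hAα : A = -α)
    (hP : A + B * P ≠ 0) :
    stepFactor α A B P * stepFactor α A B (stepFactor α A B P * P) = 1 := by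
  unfold stepFactor
  have hden : A + B * (α / (A + B * P) * P) = α ^ 2 / (A + B * P) := by
    field_simp
    rw [hAα]
    ring
  rw [hden]
  field_simp

lemma stepFactor_ne_zero {α A B P : ℝ} (hα : α ≠ 0) (hP : A + B * P ≠ 0) :
    stepFactor α A B P ≠ 0 :=
  div_ne_zero hα hP

lemma abs_stepFactor {α A B P : ℝ} (hAα : A = -α) :
    |stepFactor α A B P| = |A| / |A + B * P| := by
  rw [stepFactor, abs_div, hAα, abs_neg]

section Recurrence

variable {α A B : ℝ} {x : ℤ → ℝ}

lemma eq_stepFactor_mul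
    (hrec : ∀ n : ℤ, 0 ≤ n → x (n + 1) = α * x (n - 3) / (A + B * x (n - 1) * x (n - 3)))
    {k i j : ℤ} (hk : 1 ≤ k) (hi : i = k - 2) (hj : j = k - 4) :
    x k = stepFactor α A B (x i * x j) * x j := by
  obtain ⟨n, rfl⟩ : ∃ n, k = n + 1 := ⟨k - 1, by ring⟩
  rw [hrec n (by omega), stepFactor, hi, hj, show n + 1 - 2 = n - 1 by ring,
    show n + 1 - 4 = n - 3 by ring]
  ring

theorem eq_geometric_of_eq_neg {b d : ℝ} (hα : α ≠ 0) (hAα : A = -α)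
    (hx3 : x (-3) = d) (hx1 : x (-1) = b) (hbd : A + B * (b * d) ≠ 0)
    (hrec : ∀ n : ℤ, 0 ≤ n → x (n + 1) = α * x (n - 3) / (A + B * x (n - 1) * x (n - 3)))
    (n : ℕ) :
    x (4 * n - 3) = d * stepFactor α A B (b * d) ^ n ∧
      x (4 * n - 1) = b * (stepFactor α A B (b * d))⁻¹ ^ n := by
  set q := stepFactor α A B (b * d)
  have hq : q ≠ 0 := stepFactor_ne_zero hα hbd
  induction n with
  | zero => simp [hx3, hx1]
  | succ n ih =>
    obtain ⟨h3, h1⟩ := ih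
    have hprod : x (4 * n - 1) * x (4 * n - 3) = b * d := by
      rw [h3, h1, inv_pow]
      field_simp
    have h3' : x (4 * (n + 1 : ℕ) - 3) = q * x (4 * n - 3) := by
      rw [eq_stepFactor_mul hrec (by omega) (i := 4 * n - 1) (j := 4 * n - 3)
        (by push_cast; ring) (by push_cast; ring), hprod]
    have h1' : x (4 * (n + 1 : ℕ) - 1) = q⁻¹ * x (4 * n - 1) := by
      rw [eq_stepFactor_mul hrec (by omega) (i := 4 * (n + 1 : ℕ) - 3) (j := 4 * n - 1)
        (by push_cast; ring) (by push_cast; ring), h3', mul_assoc, mul_comm (x (4 * n - 3)),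
        hprod, eq_inv_of_mul_eq_one_right (stepFactor_mul_stepFactor_eq_one hα hAα hbd)]
    constructor
    · rw [h3', h3]; ring
    · rw [h1', h1]; ring

end Recurrence

lemma tendsto_abs_const_mul_pow_atTop {c q : ℝ} (hc : c ≠ 0) (hq : 1 < |q|) :
    Tendsto (fun n : ℕ => |c * q ^ n|) atTop atTop := by
  simp only [abs_mul, abs_pow]
  exact (tendsto_pow_atTop_atTop_of_one_lt hq).const_mul_atTop (abs_pos.mpr hc)

lemma tendsto_const_mul_inv_pow_nhds_zero (c : ℝ) {q : ℝ} (hq : 1 < |q|) :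
    Tendsto (fun n : ℕ => c * q⁻¹ ^ n) atTop (nhds 0) := by
  have hq' : |q⁻¹| < 1 := by
    rw [abs_inv]
    exact inv_lt_one_of_one_lt₀ hq
  simpa using (tendsto_pow_atTop_nhds_zero_of_abs_lt_one hq').const_mul c

theorem stmt_13_general (α A B b d : ℝ) (hα : α ≠ 0) (hAα : A = -α)
    (hb : b ≠ 0) (hd : d ≠ 0)
    (x : ℤ → ℝ)
    (hx3 : x (-3) = d) (hx1 : x (-1) = b)
    (hwd : ∀ n : ℤ, 0 ≤ n → A + B * x (n - 1) * x (n - 3) ≠ 0)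
    (hrec : ∀ n : ℤ, 0 ≤ n →
      x (n + 1) = α * x (n - 3) / (A + B * x (n - 1) * x (n - 3))) :
    (|A + B * b * d| < |A| →
      Tendsto (fun n : ℕ => x (4 * (n : ℤ) - 1)) atTop (nhds 0) ∧
      Tendsto (fun n : ℕ => |x (4 * (n : ℤ) - 3)|) atTop atTop) ∧
    (|A + B * b * d| > |A| →
      Tendsto (fun n : ℕ => x (4 * (n : ℤ) - 3)) atTop (nhds 0) ∧
      Tendsto (fun n : ℕ => |x (4 * (n : ℤ) - 1)|) atTop atTop) := by
  have hbd : A + B * (b * d) ≠ 0 := by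
    simpa [hx1, hx3, mul_assoc] using hwd 0 le_rfl
  have hbd_pos : 0 < |A + B * b * d| := abs_pos.mpr (by rwa [mul_assoc])
  have hA_pos : 0 < |A| := abs_pos.mpr (by rw [hAα]; exact neg_ne_zero.mpr hα)
  have closed := eq_geometric_of_eq_neg hα hAα hx3 hx1 hbd hrec
  have habs : |stepFactor α A B (b * d)| = |A| / |A + B * b * d| := by
    rw [abs_stepFactor hAα, mul_assoc]
  refine ⟨fun h => ?_, fun h => ?_⟩
  · have hq : 1 < |stepFactor α A B (b * d)| := by
      rwa [habs, one_lt_div hbd_pos]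
    exact ⟨(tendsto_const_mul_inv_pow_nhds_zero b hq).congr fun n => (closed n).2.symm,
      (tendsto_abs_const_mul_pow_atTop hd hq).congr fun n => by rw [(closed n).1]⟩
  · have hq : 1 < |(stepFactor α A B (b * d))⁻¹| := by
      rwa [abs_inv, habs, inv_div, one_lt_div hA_pos]
    refine ⟨(tendsto_const_mul_inv_pow_nhds_zero d hq).congr fun n => ?_,
      (tendsto_abs_const_mul_pow_atTop hb hq).congr fun n => by rw [(closed n).2]⟩
    rw [inv_inv, (closed n).1]

/-- Case `A = -α`: if `|A + B b d| < |A|` then `x_{4n-1} → 0` and `|x_{4n-3}| → ∞`;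
if `|A + B b d| > |A|` then `x_{4n-3} → 0` and `|x_{4n-1}| → ∞`. -/
theorem stmt_13 (α A B a b c d : ℝ) (hα : α ≠ 0) (hB : B ≠ 0) (hAα : A = -α)
    (ha : a ≠ 0) (hb : b ≠ 0) (hc : c ≠ 0) (hd : d ≠ 0)
    (x : ℤ → ℝ)
    (hx3 : x (-3) = d) (hx2 : x (-2) = c) (hx1 : x (-1) = b) (hx0 : x 0 = a)
    (hwd : ∀ n : ℤ, 0 ≤ n → A + B * x (n - 1) * x (n - 3) ≠ 0)
    (hrec : ∀ n : ℤ, 0 ≤ n →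
      x (n + 1) = α * x (n - 3) / (A + B * x (n - 1) * x (n - 3))) :
    (|A + B * b * d| < |A| →
      Tendsto (fun n : ℕ => x (4 * (n : ℤ) - 1)) atTop (nhds 0) ∧
      Tendsto (fun n : ℕ => |x (4 * (n : ℤ) - 3)|) atTop atTop) ∧
    (|A + B * b * d| > |A| →
      Tendsto (fun n : ℕ => x (4 * (n : ℤ) - 3)) atTop (nhds 0) ∧
      Tendsto (fun n : ℕ => |x (4 * (n : ℤ) - 1)|) atTop atTop) :=
  stmt_13_general α A B b d hα hAα hb hd x hx3 hx1 hwd hrec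
end

section
/- Assume |A/α| < 1, and let (x_n)_{n≥-3} be a well-defined solution of the difference equation. Then each of the four subsequences (x_{4n-3})_n, (x_{4n-2})_n, (x_{4n-1})_n and (x_{4n})_n converges to a (finite) real limit. -/
/-!
The substitution `z n = invProd x n = (x n * x (n - 2))⁻¹` linearizes the equation:
`z (n + 1) = q * z (n - 1) + B / α` with `q = A / α`. Hence `k ↦ z (4k + r)` converges
geometrically, with ratio `q ^ 2`, to the fixed point `L = B / (α - A)`. Four steps of the equation
give `x (n + 4) = x n * α z / (A z + B)` with `z = z (n + 2)`, and `α L = A L + B ≠ 0`, so each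
subsequence `k ↦ x (4k + r)` is `x r` times the partial products of `∏ (1 + εₖ)` with
`∑ |εₖ| < ∞`, which converge.
-/

open Filter Finset Topology

lemma exists_tendsto_of_succ_eq_mul {u ρ : ℕ → ℝ} (hρ : Summable fun k => ρ k - 1)
    (hu : ∀ k, u (k + 1) = u k * ρ k) : ∃ l, Tendsto u atTop (𝓝 l) := by
  have hmul : Multipliable ρ := by
    simpa using Real.multipliable_one_add_of_summable hρ
  have hprod : ∀ k, u k = u 0 * ∏ i ∈ range k, ρ i := by
    intro k
    induction k with
    | zero => simp
    | succ k ih => rw [hu, ih, prod_range_succ, mul_assoc]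
  exact ⟨u 0 * ∏' i, ρ i, by
    simpa only [← hprod] using hmul.tendsto_prod_tprod_nat.const_mul (u 0)⟩

lemma summable_abs_sub_of_sub_succ_eq_mul {w : ℕ → ℝ} {c L : ℝ} (hc : |c| < 1)
    (hw : ∀ k, w (k + 1) - L = c * (w k - L)) : Summable fun k => |w k - L| := by
  have hgeom : ∀ k, w k - L = c ^ k * (w 0 - L) := by
    intro k
    induction k with
    | zero => simp
    | succ k ih => rw [hw, ih, pow_succ]; ring
  refine ((summable_geometric_of_lt_one (abs_nonneg c) hc).mul_left |w 0 - L|).congr fun k => ?_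
  rw [hgeom k, abs_mul, abs_pow, mul_comm]

lemma summable_div_sub_one {α A B L : ℝ} {w : ℕ → ℝ} (hL : α * L = A * L + B)
    (hG : A * L + B ≠ 0) (hw : Summable fun k => |w k - L|) :
    Summable fun k => α * w k / (A * w k + B) - 1 := by
  have hlim : Tendsto w atTop (𝓝 L) := by
    simpa using (hw.of_abs.tendsto_atTop_zero).add_const L
  have hden : Tendsto (fun k => A * w k + B) atTop (𝓝 (A * L + B)) :=
    (hlim.const_mul A).add_const B
  have hfac : Tendsto (fun k => (α - A) / (A * w k + B)) cofinite
      (𝓝 ((α - A) / (A * L + B))) := by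
    rw [Nat.cofinite_eq_atTop]
    exact tendsto_const_nhds.div hden hG
  refine (Summable.mul_tendsto_const (by simpa using hw) hfac).congr_cofinite ?_
  rw [Nat.cofinite_eq_atTop]
  filter_upwards [hden.eventually_ne hG] with k hk
  rw [mul_div_assoc', div_sub_one hk]
  congr 1
  linear_combination -hL

structure IsSolution (α A B : ℝ) (x : ℤ → ℝ) : Prop where
  den_ne_zero : ∀ n : ℤ, 0 ≤ n → A + B * x (n - 1) * x (n - 3) ≠ 0
  succ_eq : ∀ n : ℤ, 0 ≤ n → x (n + 1) = α * x (n - 3) / (A + B * x (n - 1) * x (n - 3))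

noncomputable def invProd (x : ℤ → ℝ) (n : ℤ) : ℝ := (x n * x (n - 2))⁻¹

namespace IsSolution

variable {α A B : ℝ} {x : ℤ → ℝ}

theorem ne_zero (hx : IsSolution α A B x) (hα : α ≠ 0)
    (hinit : ∀ n, -3 ≤ n → n ≤ 0 → x n ≠ 0) {n : ℤ} (hn : -3 ≤ n) : x n ≠ 0 := by
  have hwindow : ∀ m, 0 ≤ m → x (m - 3) ≠ 0 ∧ x (m - 2) ≠ 0 ∧ x (m - 1) ≠ 0 ∧ x m ≠ 0 := by
    intro m hm
    induction m, hm using Int.leInduction with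
    | base => exact ⟨hinit _ le_rfl (by norm_num), hinit _ (by norm_num) (by norm_num),
        hinit _ (by norm_num) (by norm_num), hinit _ (by norm_num) le_rfl⟩
    | succ m hm ih =>
      obtain ⟨h3, h2, h1, h0⟩ := ih
      refine ⟨by rwa [show m + 1 - 3 = m - 2 by ring], by rwa [show m + 1 - 2 = m - 1 by ring],
        by rwa [add_sub_cancel_right], ?_⟩
      rw [hx.succ_eq m hm]
      exact div_ne_zero (mul_ne_zero hα h3) (hx.den_ne_zero m hm)
  simpa using (hwindow (n + 3) (by omega)).1

theorem invProd_succ (hx : IsSolution α A B x) (hα : α ≠ 0) (hne : ∀ n, -3 ≤ n → x n ≠ 0)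
    {n : ℤ} (hn : 0 ≤ n) : invProd x (n + 1) = A / α * invProd x (n - 1) + B / α := by
  have h1 := hne (n - 1) (by omega)
  have h3 := hne (n - 3) (by omega)
  have hden := hx.den_ne_zero n hn
  rw [invProd, invProd, show n + 1 - 2 = n - 1 by ring, show n - 1 - 2 = n - 3 by ring,
    hx.succ_eq n hn]
  field_simp

theorem add_four (hx : IsSolution α A B x) (hne : ∀ n, -3 ≤ n → x n ≠ 0) {n : ℤ} (hn : -3 ≤ n) :
    x (n + 4) = x n * (α * invProd x (n + 2) / (A * invProd x (n + 2) + B)) := by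
  have h0 := hne n hn
  have h2 := hne (n + 2) (by omega)
  have hrec := hx.succ_eq (n + 3) (by omega)
  rw [show n + 3 + 1 = n + 4 by ring, show n + 3 - 1 = n + 2 by ring,
    show n + 3 - 3 = n by ring] at hrec
  rw [hrec, invProd, show n + 2 - 2 = n by ring]
  field_simp

theorem exists_tendsto_four_mul_add (hx : IsSolution α A B x) (hα : α ≠ 0) (hB : B ≠ 0)
    (hq : |A / α| < 1) (hne : ∀ n, -3 ≤ n → x n ≠ 0) {r : ℤ} (hr : -3 ≤ r) :
    ∃ l, Tendsto (fun k : ℕ => x (4 * k + r)) atTop (𝓝 l) := by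
  have hαA : α - A ≠ 0 := by
    intro h
    rw [← sub_eq_zero.mp h, div_self hα, abs_one] at hq
    exact lt_irrefl 1 hq
  obtain ⟨L, hL⟩ : ∃ L, (α - A) * L = B := ⟨B / (α - A), mul_div_cancel₀ B hαA⟩
  have hG : A * L + B ≠ 0 := by
    rw [show A * L + B = α * L by linear_combination -hL]
    exact mul_ne_zero hα (right_ne_zero_of_mul (hL ▸ hB))
  have hq2 : |(A / α) ^ 2| < 1 := by
    rw [abs_pow]
    exact pow_lt_one₀ (abs_nonneg _) hq two_ne_zero
  have hstep : ∀ k : ℕ, invProd x (4 * (k + 1 : ℕ) + r + 2) - L =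
      (A / α) ^ 2 * (invProd x (4 * k + r + 2) - L) := by
    intro k
    rw [show 4 * ((k + 1 : ℕ) : ℤ) + r + 2 = 4 * k + r + 5 + 1 by push_cast; ring,
      hx.invProd_succ hα hne (by omega), show 4 * (k : ℤ) + r + 5 - 1 = 4 * k + r + 3 + 1 by ring,
      hx.invProd_succ hα hne (by omega), show 4 * (k : ℤ) + r + 3 - 1 = 4 * k + r + 2 by ring]
    field_simp
    linear_combination -(A + α) * hL
  have hρ := summable_div_sub_one (α := α) (by linear_combination hL) hG
    (summable_abs_sub_of_sub_succ_eq_mul (w := fun k : ℕ => invProd x (4 * k + r + 2)) hq2 hstep)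
  refine exists_tendsto_of_succ_eq_mul hρ fun k => ?_
  rw [show 4 * ((k + 1 : ℕ) : ℤ) + r = 4 * k + r + 4 by push_cast; ring,
    hx.add_four hne (by omega)]

end IsSolution

/-- If `|A/α| < 1`, the four subsequences of a well-defined solution converge. -/
theorem stmt_14 (α A B a b c d : ℝ) (hα : α ≠ 0) (hB : B ≠ 0)
    (hratio : |A / α| < 1)
    (ha : a ≠ 0) (hb : b ≠ 0) (hc : c ≠ 0) (hd : d ≠ 0)
    (x : ℤ → ℝ)
    (hx3 : x (-3) = d) (hx2 : x (-2) = c) (hx1 : x (-1) = b) (hx0 : x 0 = a)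
    (hwd : ∀ n : ℤ, 0 ≤ n → A + B * x (n - 1) * x (n - 3) ≠ 0)
    (hrec : ∀ n : ℤ, 0 ≤ n →
      x (n + 1) = α * x (n - 3) / (A + B * x (n - 1) * x (n - 3))) :
    (∃ l₃ : ℝ, Tendsto (fun n : ℕ => x (4 * (n : ℤ) - 3)) atTop (nhds l₃)) ∧
    (∃ l₂ : ℝ, Tendsto (fun n : ℕ => x (4 * (n : ℤ) - 2)) atTop (nhds l₂)) ∧
    (∃ l₁ : ℝ, Tendsto (fun n : ℕ => x (4 * (n : ℤ) - 1)) atTop (nhds l₁)) ∧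
    (∃ l₀ : ℝ, Tendsto (fun n : ℕ => x (4 * (n : ℤ))) atTop (nhds l₀)) := by
  have hx : IsSolution α A B x := ⟨hwd, hrec⟩
  have hne : ∀ n, -3 ≤ n → x n ≠ 0 := fun n hn => hx.ne_zero hα (fun m h3 h0 => by
    interval_cases m
    exacts [hx3 ▸ hd, hx2 ▸ hc, hx1 ▸ hb, hx0 ▸ ha]) hn
  have hconv := fun r (hr : -3 ≤ r) => hx.exists_tendsto_four_mul_add hα hB hratio hne hr
  refine ⟨?_, ?_, ?_, ?_⟩
  · simpa only [sub_eq_add_neg] using hconv (-3) le_rfl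
  · simpa only [sub_eq_add_neg] using hconv (-2) (by norm_num)
  · simpa only [sub_eq_add_neg] using hconv (-1) (by norm_num)
  · simpa only [add_zero] using hconv 0 (by norm_num)
end

section
/- Assume |A/α| < 1, and let (x_n)_{n≥-3} be a well-defined solution of the difference equation. Let l₃, l₂, l₁, l₀ denote the limits of the subsequences (x_{4n-3})_n, (x_{4n-2})_n, (x_{4n-1})_n and (x_{4n})_n respectively (which exist). Then l₃ ≠ 0, l₂ ≠ 0, l₁ ≠ 0, l₀ ≠ 0, and l₃·l₁ = (α − A)/B and l₂·l₀ = (α − A)/B. -/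
open Filter Finset

/-!
Along each chain `m, m + 2, m + 4, …` the reciprocal products `yₘ = (xₘ xₘ₊₂)⁻¹` satisfy the
affine recurrence `yₘ₊₂ = (A/α) yₘ + B/α`. Since `|A/α| < 1` this forces `yₘ → B/(α - A)`, so the
products of consecutive terms of each chain tend to `(α - A)/B ≠ 0`, and both factors of the
product of the limits are nonzero.
-/

theorem tendsto_of_succ_eq_mul_add {𝕜 : Type*} [NormedField 𝕜] {r s : 𝕜} (hr : ‖r‖ < 1)
    {g : ℕ → 𝕜} (hg : ∀ k, g (k + 1) = r * g k + s) :
    Tendsto g atTop (nhds (s / (1 - r))) := by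
  have h1r : 1 - r ≠ 0 := fun h => by simp [← sub_eq_zero.mp h] at hr
  set L := s / (1 - r)
  have hL : s = L - r * L := by simp only [L]; field_simp
  have hclosed : ∀ k, g k - L = r ^ k * (g 0 - L) := by
    intro k
    induction k with
    | zero => simp
    | succ k ih => rw [hg, pow_succ', mul_assoc, ← ih, hL]; ring
  have hlim : Tendsto (fun k => r ^ k * (g 0 - L) + L) atTop (nhds (0 * (g 0 - L) + L)) :=
    ((tendsto_pow_atTop_nhds_zero_of_norm_lt_one hr).mul_const _).add_const _
  rw [zero_mul, zero_add] at hlim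
  exact hlim.congr fun k => by rw [← hclosed, sub_add_cancel]

theorem sub_ne_zero_of_abs_div_lt_one {α A : ℝ} (hα : α ≠ 0) (h : |A / α| < 1) : α - A ≠ 0 :=
  fun hαA => by simp [← sub_eq_zero.mp hαA, hα] at h

section Recurrence

variable {α A B : ℝ} {x : ℤ → ℝ}

theorem ne_zero_of_rec (hα : α ≠ 0)
    (hwd : ∀ n : ℤ, 0 ≤ n → A + B * x (n - 1) * x (n - 3) ≠ 0)
    (hrec : ∀ n : ℤ, 0 ≤ n →
      x (n + 1) = α * x (n - 3) / (A + B * x (n - 1) * x (n - 3)))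
    (h₃ : x (-3) ≠ 0) (h₂ : x (-2) ≠ 0) (h₁ : x (-1) ≠ 0) (h₀ : x 0 ≠ 0) :
    ∀ m : ℤ, -3 ≤ m → x m ≠ 0 := by
  have window : ∀ k : ℕ, x (k - 3) ≠ 0 ∧ x (k - 2) ≠ 0 ∧ x (k - 1) ≠ 0 ∧ x k ≠ 0 := by
    intro k
    induction k with
    | zero => exact ⟨h₃, h₂, h₁, h₀⟩
    | succ k ih =>
      obtain ⟨hk₃, hk₂, hk₁, hk₀⟩ := ih
      have hnew : x (k + 1) ≠ 0 := by
        rw [hrec k k.cast_nonneg]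
        exact div_ne_zero (mul_ne_zero hα hk₃) (hwd k k.cast_nonneg)
      push_cast
      exact ⟨by convert hk₂ using 2; ring, by convert hk₁ using 2; ring,
        by convert hk₀ using 2; ring, hnew⟩
  intro m hm
  obtain ⟨k, rfl⟩ : ∃ k : ℕ, m = k - 3 := ⟨(m + 3).toNat, by omega⟩
  exact (window k).1

theorem inv_mul_add_four_eq (hα : α ≠ 0)
    (hrec : ∀ n : ℤ, 0 ≤ n →
      x (n + 1) = α * x (n - 3) / (A + B * x (n - 1) * x (n - 3)))
    {m : ℤ} (hm : -3 ≤ m) (h₀ : x m ≠ 0) (h₂ : x (m + 2) ≠ 0) :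
    (x (m + 2) * x (m + 4))⁻¹ = A / α * (x m * x (m + 2))⁻¹ + B / α := by
  have h := hrec (m + 3) (by omega)
  rw [show m + 3 + 1 = m + 4 by ring, show m + 3 - 1 = m + 2 by ring,
    show m + 3 - 3 = m by ring] at h
  rw [h]
  field_simp

theorem tendsto_mul_add_four_of_rec (hα : α ≠ 0) (hB : B ≠ 0) (hratio : |A / α| < 1)
    (hrec : ∀ n : ℤ, 0 ≤ n →
      x (n + 1) = α * x (n - 3) / (A + B * x (n - 1) * x (n - 3)))
    (hnz : ∀ m : ℤ, -3 ≤ m → x m ≠ 0) {m : ℤ} (hm : -3 ≤ m) :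
    Tendsto (fun n : ℕ => x (m + 4 * n) * x (m + 4 * n + 2)) atTop (nhds ((α - A) / B)) := by
  set y : ℕ → ℝ := fun k => (x (m + 2 * k) * x (m + 2 * k + 2))⁻¹
  have hy : ∀ k, y (k + 1) = A / α * y k + B / α := by
    intro k
    have h := inv_mul_add_four_eq hα hrec (m := m + 2 * k) (by omega)
      (hnz _ (by omega)) (hnz _ (by omega))
    simp only [y]
    push_cast
    convert h using 4 <;> ring
  have hlim : B / α / (1 - A / α) = B / (α - A) := by field_simp
  have hy2 := (tendsto_of_succ_eq_mul_add hratio hy).comp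
    (strictMono_mul_left_of_pos two_pos).tendsto_atTop
  rw [hlim] at hy2
  replace hy2 := hy2.inv₀ (div_ne_zero hB (sub_ne_zero_of_abs_div_lt_one hα hratio))
  rw [inv_div] at hy2
  refine hy2.congr fun n => ?_
  simp only [Function.comp, y, inv_inv]
  push_cast
  ring_nf

end Recurrence

/-- If `|A/α| < 1`, the limits `l₃, l₂, l₁, l₀` of the four subsequences are nonzero
and satisfy `l₃ l₁ = (α - A)/B` and `l₂ l₀ = (α - A)/B`. -/
theorem stmt_15 (α A B a b c d : ℝ) (hα : α ≠ 0) (hB : B ≠ 0)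
    (hratio : |A / α| < 1)
    (ha : a ≠ 0) (hb : b ≠ 0) (hc : c ≠ 0) (hd : d ≠ 0)
    (x : ℤ → ℝ)
    (hx3 : x (-3) = d) (hx2 : x (-2) = c) (hx1 : x (-1) = b) (hx0 : x 0 = a)
    (hwd : ∀ n : ℤ, 0 ≤ n → A + B * x (n - 1) * x (n - 3) ≠ 0)
    (hrec : ∀ n : ℤ, 0 ≤ n →
      x (n + 1) = α * x (n - 3) / (A + B * x (n - 1) * x (n - 3)))
    (l₃ l₂ l₁ l₀ : ℝ)
    (hl₃ : Tendsto (fun n : ℕ => x (4 * (n : ℤ) - 3)) atTop (nhds l₃))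
    (hl₂ : Tendsto (fun n : ℕ => x (4 * (n : ℤ) - 2)) atTop (nhds l₂))
    (hl₁ : Tendsto (fun n : ℕ => x (4 * (n : ℤ) - 1)) atTop (nhds l₁))
    (hl₀ : Tendsto (fun n : ℕ => x (4 * (n : ℤ))) atTop (nhds l₀)) :
    l₃ ≠ 0 ∧ l₂ ≠ 0 ∧ l₁ ≠ 0 ∧ l₀ ≠ 0 ∧
    l₃ * l₁ = (α - A) / B ∧ l₂ * l₀ = (α - A) / B := by
  have hnz := ne_zero_of_rec hα hwd hrec (hx3 ▸ hd) (hx2 ▸ hc) (hx1 ▸ hb) (hx0 ▸ ha)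
  have h₃₁ : l₃ * l₁ = (α - A) / B := tendsto_nhds_unique (hl₃.mul hl₁) <| by
    convert tendsto_mul_add_four_of_rec hα hB hratio hrec hnz (m := -3) le_rfl using 4 <;> ring
  have h₂₀ : l₂ * l₀ = (α - A) / B := tendsto_nhds_unique (hl₂.mul hl₀) <| by
    convert tendsto_mul_add_four_of_rec hα hB hratio hrec hnz (m := -2) (by norm_num)
      using 4 <;> ring
  have hne : (α - A) / B ≠ 0 := div_ne_zero (sub_ne_zero_of_abs_div_lt_one hα hratio) hB
  have h₃₁ne : l₃ * l₁ ≠ 0 := h₃₁ ▸ hne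
  have h₂₀ne : l₂ * l₀ ≠ 0 := h₂₀ ▸ hne
  exact ⟨left_ne_zero_of_mul h₃₁ne, left_ne_zero_of_mul h₂₀ne, right_ne_zero_of_mul h₃₁ne,
    right_ne_zero_of_mul h₂₀ne, h₃₁, h₂₀⟩
end

section
/- Assume |A/α| > 1, A − α + B·b·d ≠ 0 and A − α + B·a·c ≠ 0, and let (x_n)_{n≥-3} be a well-defined solution of the difference equation. Then this solution is not periodic: there is no positive integer p with x_{n+p} = x_n for all n ≥ −3. (The same conclusion holds when A = α.) -/
open Filter Finset

/-!
The quantities `y m = 1 / (x (2m-1) x (2m-3))` satisfy the affine recurrence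
`y (m+1) = (A/α) y m + B/α`. A period `p` of the solution gives `y p = y 0`. For `A = α` the
recurrence is a translation by `B/α ≠ 0`, which has no periodic orbit. For `|A/α| > 1` we have
`(A/α)^p ≠ 1`, so `y 0` must be the fixed point of the affine map, i.e. `A - α + B b d = 0`.
-/

section AffineRecurrence

theorem affine_rec_mul_one_sub_sub {R : Type*} [CommRing R] {y : ℕ → R} {k β : R}
    (hy : ∀ m, y (m + 1) = k * y m + β) (m : ℕ) :
    y m * (1 - k) - β = k ^ m * (y 0 * (1 - k) - β) := by
  induction m with
  | zero => simp
  | succ m ih => rw [hy, pow_succ', mul_assoc, ← ih]; ring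

theorem mul_one_sub_eq_of_affine_rec_periodic {R : Type*} [CommRing R] [IsDomain R]
    {y : ℕ → R} {k β : R} (hy : ∀ m, y (m + 1) = k * y m + β) {p : ℕ}
    (hk : k ^ p ≠ 1) (hp : y p = y 0) : y 0 * (1 - k) = β := by
  have h := affine_rec_mul_one_sub_sub hy p
  rw [hp] at h
  have hprod : (k ^ p - 1) * (y 0 * (1 - k) - β) = 0 := by linear_combination -h
  exact sub_eq_zero.mp ((mul_eq_zero.mp hprod).resolve_left (sub_ne_zero.mpr hk))

theorem eq_zero_of_add_rec_periodic {M : Type*} [AddCommGroup M] [IsAddTorsionFree M]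
    {y : ℕ → M} {β : M} (hy : ∀ m, y (m + 1) = y m + β) {p : ℕ}
    (hp0 : p ≠ 0) (hp : y p = y 0) : β = 0 := by
  have hclosed : ∀ m : ℕ, y m = y 0 + m • β := by
    intro m
    induction m with
    | zero => simp
    | succ m ih => rw [hy, ih, succ_nsmul, add_assoc]
  rw [hclosed p, add_eq_left] at hp
  exact (nsmul_eq_zero_iff_right hp0).mp hp

end AffineRecurrence

theorem inv_mul_eq_of_eq_div {K : Type*} [Field K] {α A B u v w : K}
    (hα : α ≠ 0) (hu : u ≠ 0) (hv : v ≠ 0) (hw : w = α * v / (A + B * u * v)) :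
    (w * u)⁻¹ = A / α * (u * v)⁻¹ + B / α := by
  rw [hw]
  field_simp

section RationalRecurrence

variable {α A B : ℝ} {x : ℤ → ℝ}

noncomputable def oddInvProd (x : ℤ → ℝ) (m : ℕ) : ℝ := (x (2 * m - 1) * x (2 * m - 3))⁻¹

theorem odd_terms_ne_zero (hα : α ≠ 0)
    (hwd : ∀ n : ℤ, 0 ≤ n → A + B * x (n - 1) * x (n - 3) ≠ 0)
    (hrec : ∀ n : ℤ, 0 ≤ n → x (n + 1) = α * x (n - 3) / (A + B * x (n - 1) * x (n - 3)))
    (h3 : x (-3) ≠ 0) (h1 : x (-1) ≠ 0) (m : ℕ) :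
    x (2 * m - 3) ≠ 0 ∧ x (2 * m - 1) ≠ 0 := by
  induction m with
  | zero => simpa using ⟨h3, h1⟩
  | succ m ih =>
    have hm : (0 : ℤ) ≤ 2 * m := by positivity
    have hnext : x (2 * m + 1) ≠ 0 := by
      rw [hrec _ hm]
      exact div_ne_zero (mul_ne_zero hα ih.1) (hwd _ hm)
    push_cast
    refine ⟨?_, ?_⟩
    · rw [show 2 * ((m : ℤ) + 1) - 3 = 2 * m - 1 by ring]; exact ih.2
    · rw [show 2 * ((m : ℤ) + 1) - 1 = 2 * m + 1 by ring]; exact hnext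

theorem oddInvProd_succ (hα : α ≠ 0)
    (hwd : ∀ n : ℤ, 0 ≤ n → A + B * x (n - 1) * x (n - 3) ≠ 0)
    (hrec : ∀ n : ℤ, 0 ≤ n → x (n + 1) = α * x (n - 3) / (A + B * x (n - 1) * x (n - 3)))
    (h3 : x (-3) ≠ 0) (h1 : x (-1) ≠ 0) (m : ℕ) :
    oddInvProd x (m + 1) = A / α * oddInvProd x m + B / α := by
  obtain ⟨hv, hu⟩ := odd_terms_ne_zero hα hwd hrec h3 h1 m
  have hm : (0 : ℤ) ≤ 2 * m := by positivity
  have hw := hrec _ hm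
  rw [show 2 * (m : ℤ) - 1 = 2 * m - 1 by ring] at hw
  unfold oddInvProd
  push_cast
  rw [show 2 * ((m : ℤ) + 1) - 1 = 2 * m + 1 by ring,
    show 2 * ((m : ℤ) + 1) - 3 = 2 * m - 1 by ring]
  exact inv_mul_eq_of_eq_div hα hu hv hw

theorem oddInvProd_periodic {p : ℕ} (hper : ∀ n : ℤ, -3 ≤ n → x (n + p) = x n) :
    oddInvProd x p = oddInvProd x 0 := by
  have hper2 : ∀ n : ℤ, -3 ≤ n → x (2 * p + n) = x n := fun n hn => by
    rw [show 2 * (p : ℤ) + n = n + p + p by ring, hper _ (by omega), hper n hn]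
  unfold oddInvProd
  push_cast
  rw [sub_eq_add_neg, sub_eq_add_neg, hper2 _ (by norm_num), hper2 _ (by norm_num)]

end RationalRecurrence

theorem stmt_17_general (α A B a b c d : ℝ) (hα : α ≠ 0) (hB : B ≠ 0)
    (hcase : (|A / α| > 1 ∧ A - α + B * b * d ≠ 0 ∧ A - α + B * a * c ≠ 0) ∨ A = α)
    (hb : b ≠ 0) (hd : d ≠ 0)
    (x : ℤ → ℝ)
    (hx3 : x (-3) = d) (hx1 : x (-1) = b)
    (hwd : ∀ n : ℤ, 0 ≤ n → A + B * x (n - 1) * x (n - 3) ≠ 0)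
    (hrec : ∀ n : ℤ, 0 ≤ n →
      x (n + 1) = α * x (n - 3) / (A + B * x (n - 1) * x (n - 3))) :
    ¬ ∃ p : ℕ, 0 < p ∧ ∀ n : ℤ, -3 ≤ n → x (n + p) = x n := by
  rintro ⟨p, hp, hper⟩
  have hy := oddInvProd_succ hα hwd hrec (hx3 ▸ hd) (hx1 ▸ hb)
  have hyp := oddInvProd_periodic hper
  rcases hcase with ⟨habs, hbd, -⟩ | rfl
  · have hk : (A / α) ^ p ≠ 1 := fun h =>
      (one_lt_pow₀ habs hp.ne').ne' (by rw [← abs_pow, h, abs_one])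
    have hfix := mul_one_sub_eq_of_affine_rec_periodic hy hk hyp
    norm_num [oddInvProd, hx1, hx3] at hfix
    apply hbd
    field_simp at hfix
    linear_combination -hfix
  · simp only [div_self hα, one_mul] at hy
    exact hB ((div_eq_zero_iff.mp (eq_zero_of_add_rec_periodic hy hp.ne' hyp)).resolve_right hα)

/-- If `|A/α| > 1` with `A - α + B b d ≠ 0` and `A - α + B a c ≠ 0`, or if `A = α`,
then a well-defined solution is not periodic. -/
theorem stmt_17 (α A B a b c d : ℝ) (hα : α ≠ 0) (hB : B ≠ 0)
    (hcase : (|A / α| > 1 ∧ A - α + B * b * d ≠ 0 ∧ A - α + B * a * c ≠ 0) ∨ A = α)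
    (ha : a ≠ 0) (hb : b ≠ 0) (hc : c ≠ 0) (hd : d ≠ 0)
    (x : ℤ → ℝ)
    (hx3 : x (-3) = d) (hx2 : x (-2) = c) (hx1 : x (-1) = b) (hx0 : x 0 = a)
    (hwd : ∀ n : ℤ, 0 ≤ n → A + B * x (n - 1) * x (n - 3) ≠ 0)
    (hrec : ∀ n : ℤ, 0 ≤ n →
      x (n + 1) = α * x (n - 3) / (A + B * x (n - 1) * x (n - 3))) :
    ¬ ∃ p : ℕ, 0 < p ∧ ∀ n : ℤ, -3 ≤ n → x (n + p) = x n :=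
  stmt_17_general α A B a b c d hα hB hcase hb hd x hx3 hx1 hwd hrec
end

section
/- Assume A − α + B·b·d = 0 and A − α + B·a·c = 0. Then the solution (x_n)_{n≥-3} of the difference equation with initial data d, c, b, a is well defined and is periodic with period 4: x_{n+4} = x_n for all n ≥ −3. In particular, if moreover d = b, c = a and b ≠ a, then the solution is the 2-periodic sequence a, b, a, b, … and has prime period 2 (it satisfies x_{n+2} = x_n for all n ≥ −3 but not x_{n+1} = x_n). -/
/-! When `A + B b d = α = A + B a c`, the 4-periodic sequence `d, c, b, a, d, c, b, a, …` solves
the recurrence: along it the denominator `A + B xₙ₋₁ xₙ₋₃` always equals `α`, so the recurrence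
reduces to `xₙ₊₁ = xₙ₋₃`. A solution is determined by its four initial values, hence the given
solution is this periodic sequence. -/

section LagRecurrence

variable {R : Type*}

theorem eq_of_lag_recurrence (F : R → R → R) {x y : ℤ → R}
    (hx : ∀ n : ℤ, 0 ≤ n → x (n + 1) = F (x (n - 1)) (x (n - 3)))
    (hy : ∀ n : ℤ, 0 ≤ n → y (n + 1) = F (y (n - 1)) (y (n - 3)))
    (hinit : ∀ n : ℤ, -3 ≤ n → n ≤ 0 → x n = y n) :
    ∀ n : ℤ, -3 ≤ n → x n = y n := by
  suffices h : ∀ k : ℕ, ∀ n : ℤ, -3 ≤ n → n ≤ k → x n = y n from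
    fun n hn => h n.toNat n hn (Int.self_le_toNat n)
  intro k
  induction k with
  | zero => exact fun n hn hn0 => hinit n hn (mod_cast hn0)
  | succ k ih =>
    intro n hn hnk
    obtain hlt | rfl : n ≤ k ∨ n = (k : ℤ) + 1 := by omega
    · exact ih n hn hlt
    · rw [hx k k.cast_nonneg, hy k k.cast_nonneg, ih (k - 1) (by omega) (by omega),
        ih (k - 3) (by omega) (by omega)]

end LagRecurrence

section FourPeriodic

variable {R : Type*}

/-- Indexed so that its values at `-3, -2, -1, 0` are `d, c, b, a`. -/
def fourPeriodic (a b c d : R) (n : ℤ) : R := ![a, d, c, b] (n : ZMod 4)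

variable (a b c d : R)

theorem fourPeriodic_add_four (n : ℤ) : fourPeriodic a b c d (n + 4) = fourPeriodic a b c d n := by
  have h4 : (4 : ZMod 4) = 0 := rfl
  simp only [fourPeriodic, Int.cast_add, Int.cast_ofNat, h4, add_zero]

theorem fourPeriodic_add_one (n : ℤ) :
    fourPeriodic a b c d (n + 1) = fourPeriodic a b c d (n - 3) := by
  rw [show n + 1 = n - 3 + 4 by ring, fourPeriodic_add_four]

theorem fourPeriodic_add_two (n : ℤ) : fourPeriodic a b a b (n + 2) = fourPeriodic a b a b n := by
  simp only [fourPeriodic, Int.cast_add]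
  generalize (n : ZMod 4) = k
  fin_cases k <;> rfl

theorem fourPeriodic_lag_product [CommRing R] (n : ℤ) :
    fourPeriodic a b c d (n - 1) * fourPeriodic a b c d (n - 3) = b * d ∨
      fourPeriodic a b c d (n - 1) * fourPeriodic a b c d (n - 3) = a * c := by
  simp only [fourPeriodic, Int.cast_sub]
  generalize (n : ZMod 4) = k
  fin_cases k
  exacts [.inl rfl, .inr rfl, .inl (mul_comm d b), .inr (mul_comm c a)]

theorem fourPeriodic_denom_eq [CommRing R] {α A B : R} (hbd : A + B * b * d = α)
    (hac : A + B * a * c = α) (n : ℤ) :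
    A + B * fourPeriodic a b c d (n - 1) * fourPeriodic a b c d (n - 3) = α := by
  rw [mul_assoc]
  rcases fourPeriodic_lag_product a b c d n with h | h <;> rw [h, ← mul_assoc] <;> assumption

theorem fourPeriodic_solves [Field R] {α A B : R} (hα : α ≠ 0) (hbd : A + B * b * d = α)
    (hac : A + B * a * c = α) (n : ℤ) :
    fourPeriodic a b c d (n + 1) = α * fourPeriodic a b c d (n - 3) /
      (A + B * fourPeriodic a b c d (n - 1) * fourPeriodic a b c d (n - 3)) := by
  rw [fourPeriodic_denom_eq a b c d hbd hac, mul_div_cancel_left₀ _ hα, fourPeriodic_add_one]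

end FourPeriodic

theorem stmt_18_general (α A B a b c d : ℝ) (hα : α ≠ 0)
    (hbd : A - α + B * b * d = 0) (hac : A - α + B * a * c = 0)
    (x : ℤ → ℝ)
    (hx3 : x (-3) = d) (hx2 : x (-2) = c) (hx1 : x (-1) = b) (hx0 : x 0 = a)
    (hrec : ∀ n : ℤ, 0 ≤ n →
      x (n + 1) = α * x (n - 3) / (A + B * x (n - 1) * x (n - 3))) :
    (∀ n : ℤ, 0 ≤ n → A + B * x (n - 1) * x (n - 3) ≠ 0) ∧
    (∀ n : ℤ, -3 ≤ n → x (n + 4) = x n) ∧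
    (d = b → c = a → b ≠ a →
      (∀ n : ℤ, -3 ≤ n → x (n + 2) = x n) ∧
      ¬ (∀ n : ℤ, -3 ≤ n → x (n + 1) = x n)) := by
  have hbd' : A + B * b * d = α := by linarith
  have hac' : A + B * a * c = α := by linarith
  have hx : ∀ n : ℤ, -3 ≤ n → x n = fourPeriodic a b c d n :=
    eq_of_lag_recurrence (fun u v => α * v / (A + B * u * v)) hrec
      (fun n _ => fourPeriodic_solves a b c d hα hbd' hac' n) fun n hn hn0 => by
        interval_cases n
        exacts [hx3, hx2, hx1, hx0]
  refine ⟨fun n hn => ?_, fun n hn => ?_, fun hdb hca hba => ⟨fun n hn => ?_, fun h => ?_⟩⟩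
  · rw [hx (n - 1) (by omega), hx (n - 3) (by omega), fourPeriodic_denom_eq a b c d hbd' hac']
    exact hα
  · rw [hx (n + 4) (by omega), hx n hn, fourPeriodic_add_four]
  · subst hdb hca
    rw [hx (n + 2) (by omega), hx n hn, fourPeriodic_add_two]
  · exact hba (by simpa [hx0, hx1] using (h (-1) (by norm_num)).symm)

/-- If `A - α + B b d = 0` and `A - α + B a c = 0`, the solution is well defined and
4-periodic; if moreover `d = b`, `c = a` and `b ≠ a`, it has prime period 2. -/
theorem stmt_18 (α A B a b c d : ℝ) (hα : α ≠ 0) (hB : B ≠ 0)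
    (hbd : A - α + B * b * d = 0) (hac : A - α + B * a * c = 0)
    (ha : a ≠ 0) (hb : b ≠ 0) (hc : c ≠ 0) (hd : d ≠ 0)
    (x : ℤ → ℝ)
    (hx3 : x (-3) = d) (hx2 : x (-2) = c) (hx1 : x (-1) = b) (hx0 : x 0 = a)
    (hrec : ∀ n : ℤ, 0 ≤ n →
      x (n + 1) = α * x (n - 3) / (A + B * x (n - 1) * x (n - 3))) :
    (∀ n : ℤ, 0 ≤ n → A + B * x (n - 1) * x (n - 3) ≠ 0) ∧
    (∀ n : ℤ, -3 ≤ n → x (n + 4) = x n) ∧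
    (d = b → c = a → b ≠ a →
      (∀ n : ℤ, -3 ≤ n → x (n + 2) = x n) ∧
      ¬ (∀ n : ℤ, -3 ≤ n → x (n + 1) = x n)) :=
  stmt_18_general α A B a b c d hα hbd hac x hx3 hx2 hx1 hx0 hrec
end

section
/- Assume |A/α| < 1. Then the difference equation admits a period-4 solution: there exist nonzero real numbers d', c', b', a' such that the solution (y_n)_{n≥-3} with initial conditions y_{-3} = d', y_{-2} = c', y_{-1} = b', y_0 = a' is well defined and satisfies y_{n+4} = y_n for all n ≥ −3. -/
/-!
A 4-periodic sequence `y` with `A + B y(n-1) y(n-3) = α ≠ 0` for all `n` solves the equation,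
because the recurrence then reads `y(n+1) = y(n-3)`. For the period block `1, 1, t, t` every
product `y(n-1) y(n-3)` equals `t`, so `t = (α - A) / B` works; it is nonzero because `|A/α| < 1`
forces `A ≠ α`.
-/

def ofZModFour (v : ZMod 4 → ℝ) (n : ℤ) : ℝ := v n

theorem ofZModFour_add_four (v : ZMod 4 → ℝ) (n : ℤ) :
    ofZModFour v (n + 4) = ofZModFour v n := by
  simp [ofZModFour, show (4 : ZMod 4) = 0 from rfl]

theorem ofZModFour_mul_eq (t : ℝ) (n : ℤ) :
    ofZModFour ![t, 1, 1, t] (n - 1) * ofZModFour ![t, 1, 1, t] (n - 3) = t := by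
  simp only [ofZModFour, Int.cast_sub]
  generalize (n : ZMod 4) = k
  fin_cases k
  all_goals first | exact one_mul t | exact mul_one t

theorem recurrence_of_periodic_four {α A B : ℝ} {y : ℤ → ℝ} (hα : α ≠ 0)
    (hper : ∀ n, y (n + 4) = y n) (hden : ∀ n, A + B * y (n - 1) * y (n - 3) = α) (n : ℤ) :
    y (n + 1) = α * y (n - 3) / (A + B * y (n - 1) * y (n - 3)) := by
  rw [hden, mul_div_cancel_left₀ _ hα, ← hper (n - 3)]
  ring_nf

theorem ne_of_abs_div_lt_one {A α : ℝ} (hα : α ≠ 0) (h : |A / α| < 1) : A ≠ α := by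
  rintro rfl
  simp [div_self hα] at h

/-- If `|A/α| < 1`, the difference equation admits a well-defined period-4 solution
with nonzero initial data. -/
theorem stmt_19 (α A B : ℝ) (hα : α ≠ 0) (hB : B ≠ 0)
    (hratio : |A / α| < 1) :
    ∃ d' c' b' a' : ℝ, d' ≠ 0 ∧ c' ≠ 0 ∧ b' ≠ 0 ∧ a' ≠ 0 ∧
      ∃ y : ℤ → ℝ,
        y (-3) = d' ∧ y (-2) = c' ∧ y (-1) = b' ∧ y 0 = a' ∧
        (∀ n : ℤ, 0 ≤ n → A + B * y (n - 1) * y (n - 3) ≠ 0) ∧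
        (∀ n : ℤ, 0 ≤ n →
          y (n + 1) = α * y (n - 3) / (A + B * y (n - 1) * y (n - 3))) ∧
        (∀ n : ℤ, -3 ≤ n → y (n + 4) = y n) := by
  set t := (α - A) / B
  have ht : t ≠ 0 := div_ne_zero (sub_ne_zero.mpr (ne_of_abs_div_lt_one hα hratio).symm) hB
  set y := ofZModFour ![t, 1, 1, t]
  have hden (n : ℤ) : A + B * y (n - 1) * y (n - 3) = α := by
    rw [mul_assoc, ofZModFour_mul_eq, mul_div_cancel₀ _ hB, add_sub_cancel]
  refine ⟨1, 1, t, t, one_ne_zero, one_ne_zero, ht, ht, y, rfl, rfl, rfl, rfl,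
    fun n _ => hden n ▸ hα,
    fun n _ => recurrence_of_periodic_four hα (ofZModFour_add_four _) hden n,
    fun n _ => ofZModFour_add_four _ n⟩
end
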